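/- arXiv:2511.14176 — 5 statements merged into one kernel-verified Lean document; each statement's English description precedes it below -/
import Mathlib

section
/- Fix real numbers t₁ < t₂ < ⋯ < t_n and identify i ∈ [n] with the point γ_d(t_i) on the moment curve in ℝ^d. Let σ, τ ⊆ [n] be simplices on γ_d (i.e., |σ|, |τ| ≤ d+1). Then conv(σ) and conv(τ) overlap in ℝ^d if and only if σ and τ are (d+2)-interlacing. -/
open Finset

/-- The moment curve in `ℝ^d`: `γ_d(s) = (s, s², …, s^d)`. -/
def momentCurve (d : ℕ) (s : ℝ) : Fin d → ℝ := fun i => s ^ (i.1 + 1)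

/-- The convex hull in `ℝ^d` of the points `γ_d(t i)` for `i ∈ σ`. -/
def mcConv (d : ℕ) {n : ℕ} (t : Fin n → ℝ) (σ : Finset (Fin n)) : Set (Fin d → ℝ) :=
  convexHull ℝ ((fun i => momentCurve d (t i)) '' ↑σ)

/-- Two simplices (given by index sets) overlap in `ℝ^d`:
`conv(σ) ∩ conv(τ) ⊋ conv(σ ∩ τ)`. -/
def Overlap (d : ℕ) {n : ℕ} (t : Fin n → ℝ) (σ τ : Finset (Fin n)) : Prop :=
  ¬ (mcConv d t σ ∩ mcConv d t τ ⊆ mcConv d t (σ ∩ τ))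

/-- Projection `ℝ^{d+1} → ℝ^d` forgetting the last coordinate. -/
def projLast (d : ℕ) (x : Fin (d + 1) → ℝ) : Fin d → ℝ := fun i => x i.castSucc

/-- `h_σ ≤ h_τ` on `conv(σ) ∩ conv(τ)`, phrased via the liftings to `γ_{d+1}`:
any point of the lifted `σ`-simplex lying above a point of the lifted `τ`-simplex
(same projection) has smaller or equal last coordinate. -/
def HeightLE (d : ℕ) {n : ℕ} (t : Fin n → ℝ) (σ τ : Finset (Fin n)) : Prop :=
  ∀ q ∈ mcConv (d + 1) t σ, ∀ q' ∈ mcConv (d + 1) t τ,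
    projLast d q = projLast d q' → q (Fin.last d) ≤ q' (Fin.last d)

/-- `σ <_{d+1} τ`: `σ` and `τ` overlap in `ℝ^d` and `h_σ ≤ h_τ` on the common domain. -/
def HeightLT (d : ℕ) {n : ℕ} (t : Fin n → ℝ) (σ τ : Finset (Fin n)) : Prop :=
  Overlap d t σ τ ∧ HeightLE d t σ τ

/-- A triangulation of `conv(A)` without new vertices: a family of `d`-simplices with
vertices in `A`, pairwise non-overlapping, whose convex hulls cover `conv(A)`. -/
def IsTriangulation (d : ℕ) {n : ℕ} (t : Fin n → ℝ) (A : Finset (Fin n))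
    (T : Finset (Finset (Fin n))) : Prop :=
  (∀ σ ∈ T, σ.card = d + 1 ∧ σ ⊆ A) ∧
  (∀ σ ∈ T, ∀ τ ∈ T, σ ≠ τ → ¬ Overlap d t σ τ) ∧
  (∀ p ∈ mcConv d t A, ∃ σ ∈ T, p ∈ mcConv d t σ)

/-- The triangulation `T` uses every vertex of `A`. -/
def UsesAllVertices {n : ℕ} (A : Finset (Fin n)) (T : Finset (Finset (Fin n))) : Prop :=
  ∀ a ∈ A, ∃ σ ∈ T, a ∈ σ

/-- `σ` is a face of the triangulation `T`. -/
def IsFaceOf {n : ℕ} (σ : Finset (Fin n)) (T : Finset (Finset (Fin n))) : Prop :=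
  ∃ ρ ∈ T, σ ⊆ ρ

/-- An alternating sequence `v₁ < ⋯ < v_k` of type (σ): odd-numbered entries
(0-indexed even positions) in `σ`, even-numbered entries in `τ`. -/
def AltSeq {n : ℕ} (σ τ : Finset (Fin n)) (k : ℕ) : Prop :=
  ∃ v : Fin k → Fin n, StrictMono v ∧
    ∀ i : Fin k, (i.1 % 2 = 0 → v i ∈ σ) ∧ (i.1 % 2 = 1 → v i ∈ τ)

/-- `σ` and `τ` are `k`-interlacing. -/
def Interlacing {n : ℕ} (σ τ : Finset (Fin n)) (k : ℕ) : Prop :=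
  AltSeq σ τ k ∨ AltSeq τ σ k

/-- `σ ≤_{d+1} T`: the height of `σ` is at most that of `T` on `conv(σ)`. -/
def SimplexLE (d : ℕ) {n : ℕ} (t : Fin n → ℝ) (σ : Finset (Fin n))
    (T : Finset (Finset (Fin n))) : Prop :=
  ∀ τ ∈ T, HeightLE d t σ τ

/-- `T ≤_{d+1} σ`: the height of `T` is at most that of `σ` on `conv(σ)`. -/
def TriLE (d : ℕ) {n : ℕ} (t : Fin n → ℝ) (T : Finset (Finset (Fin n)))
    (σ : Finset (Fin n)) : Prop :=
  ∀ τ ∈ T, HeightLE d t τ σ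

section OverlapAux
open Polynomial

private lemma neg1or (N : ℕ) : ((-1:ℝ)^N = 1 ∨ (-1:ℝ)^N = -1) :=
  (Nat.even_or_odd N).imp (fun h => h.neg_one_pow) (fun h => h.neg_one_pow)

private lemma sign_step_opp {e x y z : ℝ} (he : e = 1 ∨ e = -1)
    (h1 : 0 < e * (x * y)) (h2 : y * z < 0) : 0 < (-e) * (x * z) := by
  rcases he with rfl | rfl <;> nlinarith [sq_nonneg y]

private lemma sign_step_same {e x y z : ℝ} (he : e = 1 ∨ e = -1)
    (h1 : 0 < e * (x * y)) (h2 : 0 < y * z) : 0 < e * (x * z) := by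
  rcases he with rfl | rfl <;> nlinarith [sq_nonneg y]

private lemma sign_opp' {e x y z : ℝ} (he : e = 1 ∨ e = -1) (hx : x ≠ 0)
    (h1 : 0 < e * (x * y)) (h2 : 0 < (-e) * (x * z)) : y * z < 0 := by
  rcases he with rfl | rfl <;> nlinarith [mul_self_pos.2 hx]

private lemma key_alt {m : ℕ} {s : Fin m → ℝ} (hs : StrictMono s) (d : ℕ) {c : Fin m → ℝ}
    (hmom : ∀ k ≤ d, ∑ i, c i * s i ^ k = 0) (hc : ∃ i, c i ≠ 0) :
    ∃ v : Fin (d + 2) → Fin m, StrictMono v ∧ (∀ j, c (v j) ≠ 0) ∧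
      ∀ j : ℕ, ∀ hj : j + 1 < d + 2, c (v ⟨j, by omega⟩) * c (v ⟨j + 1, hj⟩) < 0 := by
  classical
  set P : Finset (Fin m) := univ.filter (fun i => c i ≠ 0) with hP
  have hmemP : ∀ i, i ∈ P ↔ c i ≠ 0 := by intro i; simp [hP]
  have hPne : P.Nonempty := by obtain ⟨i, hi⟩ := hc; exact ⟨i, (hmemP i).2 hi⟩
  set i₀ := P.min' hPne with hi₀def
  have hi₀P : i₀ ∈ P := P.min'_mem hPne
  have hi₀min : ∀ i ∈ P, i₀ ≤ i := fun i hi => P.min'_le i hi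
  have hci₀ : c i₀ ≠ 0 := (hmemP i₀).1 hi₀P
  set flips : Finset (Fin m) :=
    P.filter (fun i => ∃ j ∈ P, j < i ∧ c j * c i < 0 ∧ ∀ k ∈ P, k < i → k ≤ j) with hflips
  have hflipsP : flips ⊆ P := filter_subset _ _
  have hflipgt : ∀ k ∈ flips, i₀ < k := by
    intro k hk
    obtain ⟨j, hjP, hjlt, -, -⟩ := (mem_filter.1 hk).2
    exact lt_of_le_of_lt (hi₀min j hjP) hjlt
  have hi₀flips : i₀ ∉ flips := fun h => lt_irrefl _ (hflipgt i₀ h)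
  set ν : Fin m → ℕ := fun i => (flips.filter (fun k => k ≤ i)).card with hν
  have hνi₀ : ν i₀ = 0 := by
    rw [hν]
    simp only
    rw [Finset.card_eq_zero, Finset.filter_eq_empty_iff]
    intro k hk
    exact not_le.2 (hflipgt k hk)
  -- the "previous support element"
  have hprev : ∀ i ∈ P, i ≠ i₀ → ∃ j ∈ P, j < i ∧ (∀ k ∈ P, k < i → k ≤ j) := by
    intro i hi hne
    have hlt : i₀ < i := lt_of_le_of_ne (hi₀min i hi) (Ne.symm hne)
    have hQ : (P.filter (fun j => j < i)).Nonempty := ⟨i₀, mem_filter.2 ⟨hi₀P, hlt⟩⟩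
    refine ⟨(P.filter (fun j => j < i)).max' hQ, ?_, ?_, ?_⟩
    · exact (mem_filter.1 ((P.filter _).max'_mem hQ)).1
    · exact (mem_filter.1 ((P.filter _).max'_mem hQ)).2
    · intro k hk hki
      apply Finset.le_max'
      exact mem_filter.2 ⟨hk, hki⟩
  -- sign structure
  have hsign : ∀ i ∈ P, 0 < (-1 : ℝ) ^ (ν i) * (c i₀ * c i) := by
    have main : ∀ N : ℕ, ∀ i ∈ P, i.1 ≤ N → 0 < (-1 : ℝ) ^ (ν i) * (c i₀ * c i) := by
      intro N
      induction N with
      | zero =>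
        intro i hi hiN
        have : i = i₀ := le_antisymm (by omega) (hi₀min i hi)
        subst this
        rw [hνi₀, pow_zero, one_mul]
        exact mul_self_pos.2 hci₀
      | succ N IH =>
        intro i hi hiN
        by_cases hieq : i = i₀
        · subst hieq
          rw [hνi₀, pow_zero, one_mul]
          exact mul_self_pos.2 hci₀
        · by_cases hif : i ∈ flips
          · obtain ⟨j, hjP, hjlt, hjsgn, hjmax⟩ := (mem_filter.1 hif).2
            have hIH := IH j hjP (by have := hjlt; omega)
            have hstep : flips.filter (fun k => k ≤ i)
                = insert i (flips.filter (fun k => k ≤ j)) := by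
              ext k
              simp only [mem_filter, mem_insert]
              constructor
              · rintro ⟨hkf, hki⟩
                rcases lt_or_eq_of_le hki with h | h
                · exact Or.inr ⟨hkf, hjmax k (hflipsP hkf) h⟩
                · exact Or.inl h
              · rintro (rfl | ⟨hkf, hkj⟩)
                · exact ⟨hif, le_refl _⟩
                · exact ⟨hkf, hkj.trans hjlt.le⟩
            have hnotmem : i ∉ flips.filter (fun k => k ≤ j) := by
              simp only [mem_filter]
              rintro ⟨-, hle⟩
              exact absurd hle (not_le.2 hjlt)
            have hνi : ν i = ν j + 1 := by
              rw [hν]; simp only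
              rw [hstep, card_insert_of_notMem hnotmem]
            rw [hνi, pow_succ]
            calc (0:ℝ) < (-(-1:ℝ)^(ν j)) * (c i₀ * c i) :=
                  sign_step_opp (neg1or _) hIH hjsgn
              _ = (-1:ℝ)^(ν j) * -1 * (c i₀ * c i) := by ring
          · obtain ⟨j, hjP, hjlt, hjmax⟩ := hprev i hi hieq
            have hIH := IH j hjP (by have := hjlt; omega)
            have hnlt : ¬ (c j * c i < 0) := fun h =>
              hif (mem_filter.2 ⟨hi, j, hjP, hjlt, h, hjmax⟩)
            have hpos : 0 < c j * c i :=
              lt_of_le_of_ne (not_lt.1 hnlt)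
                (Ne.symm (mul_ne_zero ((hmemP j).1 hjP) ((hmemP i).1 hi)))
            have hνi : ν i = ν j := by
              rw [hν]; simp only
              congr 1
              ext k
              simp only [mem_filter]
              constructor
              · rintro ⟨hkf, hki⟩
                rcases lt_or_eq_of_le hki with h | h
                · exact ⟨hkf, hjmax k (hflipsP hkf) h⟩
                · exact absurd (h ▸ hkf) hif
              · rintro ⟨hkf, hkj⟩
                exact ⟨hkf, hkj.trans hjlt.le⟩
            rw [hνi]
            exact sign_step_same (neg1or _) hIH hpos
    exact fun i hi => main i.1 i hi le_rfl
  -- the midpoint roots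
  set wf : Fin m → ℝ := fun k => (s ⟨k.1 - 1, Nat.lt_of_le_of_lt (Nat.sub_le _ _) k.2⟩ + s k) / 2
    with hwf
  have hwprop : ∀ k ∈ flips, ∀ i : Fin m, (i < k → s i < wf k) ∧ (k ≤ i → wf k < s i) := by
    intro k hk i
    have hk1 : 1 ≤ k.1 := by
      have := hflipgt k hk
      omega
    have hpred : (⟨k.1 - 1, Nat.lt_of_le_of_lt (Nat.sub_le _ _) k.2⟩ : Fin m) < k := by
      simp only [Fin.lt_def]
      omega
    have hps := hs hpred
    constructor
    · intro hik
      have : i ≤ (⟨k.1 - 1, Nat.lt_of_le_of_lt (Nat.sub_le _ _) k.2⟩ : Fin m) := by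
        simp only [Fin.le_def]
        have : i.1 < k.1 := hik
        omega
      have := hs.monotone this
      rw [hwf]
      simp only
      linarith
    · intro hki
      have := hs.monotone hki
      rw [hwf]
      simp only
      linarith
  -- the cardinality bound
  have hcard : d + 1 ≤ flips.card := by
    by_contra hlt
    push_neg at hlt
    have hFd : flips.card ≤ d := by omega
    set q : Polynomial ℝ := ∏ k ∈ flips, (X - C (wf k)) with hq
    have hqdeg : q.natDegree = flips.card := by
      rw [hq, natDegree_prod_of_monic _ _ (fun k _ => monic_X_sub_C (wf k))]
      simp [natDegree_X_sub_C]
    have heval : ∀ i : Fin m, q.eval (s i) = ∏ k ∈ flips, (s i - wf k) := by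
      intro i
      rw [hq]
      simp [eval_prod]
    have hzero : ∑ i, c i * q.eval (s i) = 0 := by
      have hterm : ∀ i : Fin m, c i * q.eval (s i)
          = ∑ k ∈ Finset.range (d+1), q.coeff k * (c i * s i ^ k) := by
        intro i
        rw [eval_eq_sum_range' (show q.natDegree < d + 1 by omega), mul_sum]
        exact Finset.sum_congr rfl fun k _ => by ring
      rw [Finset.sum_congr rfl fun i _ => hterm i, Finset.sum_comm]
      refine Finset.sum_eq_zero fun k hk => ?_
      rw [← mul_sum, hmom k (by simpa using Nat.lt_succ_iff.1 (Finset.mem_range.1 hk)), mul_zero]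
    have hterm : ∀ i ∈ P, 0 < ((-1:ℝ)^flips.card * c i₀) * (c i * q.eval (s i)) := by
      intro i hi
      have hsplit := prod_filter_mul_prod_filter_not flips (fun k => k ≤ i)
        (fun k => s i - wf k)
      have hA : 0 < ∏ k ∈ flips.filter (fun k => k ≤ i), (s i - wf k) :=
        prod_pos fun k hk => by
          have := (hwprop k (mem_filter.1 hk).1 i).2 (mem_filter.1 hk).2
          linarith
      have hB : 0 < ∏ k ∈ flips.filter (fun k => ¬ k ≤ i), (wf k - s i) :=
        prod_pos fun k hk => by
          have := (hwprop k (mem_filter.1 hk).1 i).1 (not_le.1 (mem_filter.1 hk).2)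
          linarith
      set cg := (flips.filter (fun k => ¬ k ≤ i)).card with hcg
      have hBneg : ∏ k ∈ flips.filter (fun k => ¬ k ≤ i), (s i - wf k)
          = (-1:ℝ)^cg * ∏ k ∈ flips.filter (fun k => ¬ k ≤ i), (wf k - s i) := by
        calc ∏ k ∈ flips.filter (fun k => ¬ k ≤ i), (s i - wf k)
            = ∏ k ∈ flips.filter (fun k => ¬ k ≤ i), ((-1) * (wf k - s i)) :=
              Finset.prod_congr rfl fun k _ => by ring
          _ = (-1:ℝ)^cg * ∏ k ∈ flips.filter (fun k => ¬ k ≤ i), (wf k - s i) := by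
              rw [Finset.prod_mul_distrib, Finset.prod_const, hcg]
      have hcards : ν i + cg = flips.card := by
        rw [hν, hcg]
        exact card_filter_add_card_filter_not _
      have hpow : (-1:ℝ)^flips.card = (-1)^(ν i) * (-1)^cg := by
        rw [← pow_add, hcards]
      have hqe : q.eval (s i)
          = (∏ k ∈ flips.filter (fun k => k ≤ i), (s i - wf k))
            * ((-1:ℝ)^cg * ∏ k ∈ flips.filter (fun k => ¬ k ≤ i), (wf k - s i)) := by
        rw [heval, ← hsplit, hBneg]
      have hsq : ((-1:ℝ)^cg) * ((-1:ℝ)^cg) = 1 := by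
        rw [← pow_add]
        exact Even.neg_one_pow ⟨cg, rfl⟩
      have h1 := hsign i hi
      have h2 := mul_pos hA hB
      have key : ((-1:ℝ)^(ν i) * (-1:ℝ)^cg * c i₀)
            * (c i * ((∏ k ∈ flips.filter (fun k => k ≤ i), (s i - wf k))
              * ((-1:ℝ)^cg * ∏ k ∈ flips.filter (fun k => ¬ k ≤ i), (wf k - s i))))
          = (((-1:ℝ)^(ν i) * (c i₀ * c i))
              * ((∏ k ∈ flips.filter (fun k => k ≤ i), (s i - wf k))
                * ∏ k ∈ flips.filter (fun k => ¬ k ≤ i), (wf k - s i)))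
            * (((-1:ℝ)^cg) * ((-1:ℝ)^cg)) := by ring
      rw [hqe, hpow, key, hsq, mul_one]
      exact mul_pos h1 h2
    have hsumz : ∑ i, ((-1:ℝ)^flips.card * c i₀) * (c i * q.eval (s i)) = 0 := by
      rw [← mul_sum, hzero, mul_zero]
    have hsump : 0 < ∑ i, ((-1:ℝ)^flips.card * c i₀) * (c i * q.eval (s i)) := by
      refine Finset.sum_pos' (fun i _ => ?_) ⟨i₀, mem_univ _, hterm i₀ hi₀P⟩
      by_cases hi : i ∈ P
      · exact (hterm i hi).le
      · have : c i = 0 := by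
          by_contra h
          exact hi ((hmemP i).2 h)
        rw [this]
        simp
    linarith
  -- assemble the alternating sequence
  set A : Finset (Fin m) := insert i₀ flips with hA
  have hAP : A ⊆ P := insert_subset hi₀P hflipsP
  have hAcard : d + 2 ≤ A.card := by
    rw [hA, card_insert_of_notMem hi₀flips]
    omega
  set e := A.orderEmbOfFin (rfl : A.card = A.card) with he
  have hememb : ∀ b, e b ∈ A := fun b => A.orderEmbOfFin_mem rfl b
  set v : Fin (d + 2) → Fin m := fun j => e (Fin.castLE hAcard j) with hv
  have hvmono : StrictMono v := by
    intro a b hab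
    exact e.strictMono (show (Fin.castLE hAcard a) < Fin.castLE hAcard b from hab)
  have hvA : ∀ j, v j ∈ A := fun j => hememb _
  have hvne : ∀ j, c (v j) ≠ 0 := fun j => (hmemP _).1 (hAP (hvA j))
  -- consecutive elements of A have opposite signs
  have hcons : ∀ x y : Fin m, x ∈ A → y ∈ A → x < y →
      (∀ z ∈ A, z ≤ x ∨ y ≤ z) → c x * c y < 0 := by
    intro x y hxA hyA hxy hbet
    have hyflips : y ∈ flips := by
      rcases mem_insert.1 hyA with rfl | h
      · exact absurd (lt_of_le_of_lt (hi₀min x (hAP hxA)) hxy) (lt_irrefl _)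
      · exact h
    have hset : flips.filter (fun k => k ≤ y) = insert y (flips.filter (fun k => k ≤ x)) := by
      ext k
      simp only [mem_filter, mem_insert]
      constructor
      · rintro ⟨hkf, hky⟩
        rcases lt_or_eq_of_le hky with h | h
        · refine Or.inr ⟨hkf, ?_⟩
          rcases hbet k (mem_insert_of_mem hkf) with h' | h'
          · exact h'
          · exact absurd h (not_lt.2 h')
        · exact Or.inl h
      · rintro (rfl | ⟨hkf, hkx⟩)
        · exact ⟨hyflips, le_refl _⟩
        · exact ⟨hkf, hkx.trans hxy.le⟩
    have hnotmem : y ∉ flips.filter (fun k => k ≤ x) := by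
      simp only [mem_filter]
      rintro ⟨-, hle⟩
      exact absurd hle (not_le.2 hxy)
    have hνy : ν y = ν x + 1 := by
      rw [hν]; simp only
      rw [hset, card_insert_of_notMem hnotmem]
    have h1 := hsign x (hAP hxA)
    have h2 := hsign y (hAP hyA)
    rw [hνy, pow_succ] at h2
    have h2' : 0 < (-(-1:ℝ)^(ν x)) * (c i₀ * c y) := by
      calc (0:ℝ) < (-1:ℝ)^(ν x) * -1 * (c i₀ * c y) := h2
        _ = (-(-1:ℝ)^(ν x)) * (c i₀ * c y) := by ring
    exact sign_opp' (neg1or (ν x)) hci₀ h1 h2'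
  refine ⟨v, hvmono, hvne, ?_⟩
  intro j hj
  have hjlt : j < d + 2 := by omega
  apply hcons
  · exact hvA _
  · exact hvA _
  · exact hvmono (show (⟨j, hjlt⟩ : Fin (d+2)) < ⟨j+1, hj⟩ from by simp [Fin.lt_def])
  · intro z hz
    have : z ∈ Set.range e := by
      rw [he, range_orderEmbOfFin]
      exact hz
    obtain ⟨b, rfl⟩ := this
    rcases le_or_gt b.1 j with h | h
    · left
      apply e.monotone
      show b ≤ Fin.castLE hAcard ⟨j, hjlt⟩
      simp only [Fin.le_def, Fin.coe_castLE]
      exact h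
    · right
      apply e.monotone
      show Fin.castLE hAcard ⟨j+1, hj⟩ ≤ b
      simp only [Fin.le_def, Fin.coe_castLE]
      exact h
private lemma alt_pattern {m K : ℕ} {c : Fin m → ℝ} {v : Fin (K + 1) → Fin m}
    (halt : ∀ j : ℕ, ∀ hj : j + 1 < K + 1, c (v ⟨j, by omega⟩) * c (v ⟨j + 1, hj⟩) < 0)
    (h0 : 0 < c (v ⟨0, Nat.succ_pos K⟩)) :
    ∀ j : ℕ, ∀ hj : j < K + 1,
      (j % 2 = 0 → 0 < c (v ⟨j, hj⟩)) ∧ (j % 2 = 1 → c (v ⟨j, hj⟩) < 0) := by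
  intro j
  induction j with
  | zero =>
    intro hj
    exact ⟨fun _ => h0, fun h => absurd h (by omega)⟩
  | succ j IH =>
    intro hj
    have hj' : j < K + 1 := by omega
    have hm := halt j hj
    obtain ⟨he, ho⟩ := IH hj'
    constructor
    · intro hpar
      have h1 : c (v ⟨j, hj'⟩) < 0 := ho (by omega)
      nlinarith [hm]
    · intro hpar
      have h1 : 0 < c (v ⟨j, hj'⟩) := he (by omega)
      nlinarith [hm]

private lemma mcConv_exists_weights {d n : ℕ} {t : Fin n → ℝ} {σ : Finset (Fin n)}
    {x : Fin d → ℝ} (hx : x ∈ mcConv d t σ) :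
    ∃ a : Fin n → ℝ, (∀ i, 0 ≤ a i) ∧ (∀ i, a i ≠ 0 → i ∈ σ) ∧
      ∑ i, a i = 1 ∧ ∑ i, a i • momentCurve d (t i) = x := by
  classical
  rw [mcConv, _root_.convexHull_eq] at hx
  obtain ⟨ι, T, w, z, hw0, hw1, hz, hcm⟩ := hx
  rw [Finset.centerMass_eq_of_sum_1 _ _ hw1] at hcm
  have hTne : T.Nonempty := by
    rcases T.eq_empty_or_nonempty with rfl | h
    · simp at hw1
    · exact h
  have hσne : σ.Nonempty := by
    obtain ⟨i0, hi0⟩ := hTne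
    obtain ⟨p, hp, -⟩ := hz i0 hi0
    exact ⟨p, hp⟩
  obtain ⟨p₀, hp₀⟩ := hσne
  set g : ι → Fin n := fun i =>
    if h : ∃ p, p ∈ σ ∧ momentCurve d (t p) = z i then h.choose else p₀ with hg
  have hgσ : ∀ i, g i ∈ σ := by
    intro i
    by_cases h : ∃ p, p ∈ σ ∧ momentCurve d (t p) = z i
    · simp only [hg, dif_pos h]
      exact h.choose_spec.1
    · simp only [hg, dif_neg h]
      exact hp₀
  have hgz : ∀ i ∈ T, momentCurve d (t (g i)) = z i := by
    intro i hi
    obtain ⟨p, hp, hpz⟩ := hz i hi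
    have hex : ∃ p, p ∈ σ ∧ momentCurve d (t p) = z i := ⟨p, hp, hpz⟩
    simp only [hg, dif_pos hex]
    exact hex.choose_spec.2
  refine ⟨fun j => ∑ i ∈ T.filter (fun i => g i = j), w i, ?_, ?_, ?_, ?_⟩
  · intro j
    exact Finset.sum_nonneg fun i hi => hw0 i (Finset.mem_filter.1 hi).1
  · intro j hj
    obtain ⟨i, hi, -⟩ := Finset.exists_ne_zero_of_sum_ne_zero hj
    obtain ⟨-, rfl⟩ := Finset.mem_filter.1 hi
    exact hgσ i
  · rw [Finset.sum_fiberwise_of_maps_to (fun i _ => Finset.mem_univ (g i))]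
    exact hw1
  · calc ∑ j, (∑ i ∈ T.filter (fun i => g i = j), w i) • momentCurve d (t j)
        = ∑ j, ∑ i ∈ T.filter (fun i => g i = j), w i • z i := by
          refine Finset.sum_congr rfl fun j _ => ?_
          rw [Finset.sum_smul]
          refine Finset.sum_congr rfl fun i hi => ?_
          obtain ⟨hiT, hgi⟩ := Finset.mem_filter.1 hi
          rw [← hgz i hiT, hgi]
      _ = ∑ i ∈ T, w i • z i :=
          Finset.sum_fiberwise_of_maps_to (fun i _ => Finset.mem_univ (g i)) _
      _ = x := hcm

private lemma mcConv_of_weights {d n : ℕ} {t : Fin n → ℝ} {σ : Finset (Fin n)}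
    {a : Fin n → ℝ} (ha0 : ∀ i, 0 ≤ a i) (hasupp : ∀ i, a i ≠ 0 → i ∈ σ)
    (hsum : ∑ i, a i = 1) :
    ∑ i, a i • momentCurve d (t i) ∈ mcConv d t σ := by
  classical
  set σ' : Finset (Fin n) := univ.filter (fun i => a i ≠ 0) with hσ'
  have hsum' : ∑ i ∈ σ', a i = 1 := by
    rw [hσ', Finset.sum_filter_ne_zero]
    exact hsum
  have hvec : ∑ i ∈ σ', a i • momentCurve d (t i) = ∑ i, a i • momentCurve d (t i) := by
    rw [hσ']
    refine Finset.sum_filter_of_ne fun i _ h => ?_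
    intro h0
    rw [h0] at h
    simp at h
  rw [← hvec, mcConv]
  have hmem : ∀ i ∈ σ', momentCurve d (t i) ∈ ((fun i => momentCurve d (t i)) '' ↑σ) := by
    intro i hi
    exact Set.mem_image_of_mem _ (Finset.mem_coe.2 (hasupp i (Finset.mem_filter.1 hi).2))
  have hc := Finset.centerMass_mem_convexHull (s := ((fun i => momentCurve d (t i)) '' ↑σ)) σ'
    (fun i _ => ha0 i) (by rw [hsum']; norm_num) hmem
  rwa [Finset.centerMass_eq_of_sum_1 _ _ hsum'] at hc

private lemma moments_of_weights {d n : ℕ} {t : Fin n → ℝ} {a b : Fin n → ℝ}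
    (hsa : ∑ i, a i = 1) (hsb : ∑ i, b i = 1)
    (heq : ∑ i, a i • momentCurve d (t i) = ∑ i, b i • momentCurve d (t i)) :
    ∀ k ≤ d, ∑ i, (a i - b i) * t i ^ k = 0 := by
  intro k hk
  have hsplit : ∑ i, (a i - b i) * t i ^ k
      = ∑ i, a i * t i ^ k - ∑ i, b i * t i ^ k := by
    rw [← Finset.sum_sub_distrib]
    exact Finset.sum_congr rfl fun i _ => by ring
  rcases Nat.eq_zero_or_pos k with rfl | hkpos
  · simp only [pow_zero, mul_one] at hsplit ⊢
    rw [hsplit, hsa, hsb, sub_self]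
  · have hkd : k - 1 < d := by omega
    have hco := congrFun heq ⟨k - 1, hkd⟩
    simp only [Finset.sum_apply, Pi.smul_apply, momentCurve, smul_eq_mul] at hco
    have hk1 : k - 1 + 1 = k := by omega
    rw [hk1] at hco
    rw [hsplit, hco, sub_self]

private lemma overlap_of_dependence {d n : ℕ} {t : Fin n → ℝ} (ht : StrictMono t)
    {σ τ : Finset (Fin n)} (hσ : σ.card ≤ d + 1) (hτ : τ.card ≤ d + 1)
    (c : Fin n → ℝ) (hmom : ∀ k ≤ d, ∑ i, c i * t i ^ k = 0)
    (hpos : ∀ i, 0 < c i → i ∈ σ) (hneg : ∀ i, c i < 0 → i ∈ τ)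
    (hex : ∃ i, 0 < c i) :
    Overlap d t σ τ := by
  classical
  obtain ⟨i₁, hi₁⟩ := hex
  set cp : Fin n → ℝ := fun i => max (c i) 0 with hcp
  set cn : Fin n → ℝ := fun i => max (-c i) 0 with hcn
  have hdiff : ∀ i, cp i - cn i = c i := by
    intro i
    rcases le_total (c i) 0 with h | h
    · simp only [hcp, hcn]
      rw [max_eq_right h, max_eq_left (neg_nonneg.2 h)]
      ring
    · simp only [hcp, hcn]
      rw [max_eq_left h, max_eq_right (neg_nonpos.2 h)]
      ring
  have hcp0 : ∀ i, 0 ≤ cp i := fun i => le_max_right _ _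
  have hcn0 : ∀ i, 0 ≤ cn i := fun i => le_max_right _ _
  have hcppos : ∀ i, cp i ≠ 0 → 0 < c i := by
    intro i h
    by_contra h'
    push_neg at h'
    exact h (by simp only [hcp]; rw [max_eq_right h'])
  have hcnneg : ∀ i, cn i ≠ 0 → c i < 0 := by
    intro i h
    by_contra h'
    push_neg at h'
    exact h (by simp only [hcn]; rw [max_eq_right (neg_nonpos.2 h')])
  have hsum0 : ∑ i, c i = 0 := by
    have := hmom 0 (Nat.zero_le d)
    simpa using this
  set S := ∑ i, cp i with hS
  have hSpos : 0 < S :=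
    Finset.sum_pos' (fun i _ => hcp0 i)
      ⟨i₁, mem_univ _, by simp only [hcp]; rw [max_eq_left hi₁.le]; exact hi₁⟩
  have hsumn : ∑ i, cn i = S := by
    have h1 : ∑ i, cp i - ∑ i, cn i = 0 := by
      rw [← Finset.sum_sub_distrib, Finset.sum_congr rfl fun i _ => hdiff i]
      exact hsum0
    rw [hS]
    linarith
  have hvecc : ∑ i, c i • momentCurve d (t i) = 0 := by
    funext p
    simp only [Finset.sum_apply, Pi.smul_apply, momentCurve, smul_eq_mul, Pi.zero_apply]
    exact hmom (p.1 + 1) (by omega)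
  have hvec : ∑ i, cp i • momentCurve d (t i) = ∑ i, cn i • momentCurve d (t i) := by
    have h1 : ∑ i, cp i • momentCurve d (t i) - ∑ i, cn i • momentCurve d (t i)
        = ∑ i, c i • momentCurve d (t i) := by
      rw [← Finset.sum_sub_distrib]
      refine Finset.sum_congr rfl fun i _ => ?_
      rw [← hdiff i, sub_smul]
    rw [hvecc] at h1
    exact sub_eq_zero.1 h1
  have hscale : ∀ f : Fin n → ℝ,
      ∑ i, (S⁻¹ * f i) • momentCurve d (t i) = S⁻¹ • ∑ i, f i • momentCurve d (t i) := by
    intro f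
    rw [Finset.smul_sum]
    exact Finset.sum_congr rfl fun i _ => (smul_smul _ _ _).symm
  have hsumA : ∑ i, S⁻¹ * cp i = 1 := by
    rw [← Finset.mul_sum, ← hS, inv_mul_cancel₀ hSpos.ne']
  have hsumB : ∑ i, S⁻¹ * cn i = 1 := by
    rw [← Finset.mul_sum, hsumn, inv_mul_cancel₀ hSpos.ne']
  have hA0 : ∀ i, 0 ≤ S⁻¹ * cp i := fun i => mul_nonneg (by positivity) (hcp0 i)
  have hB0 : ∀ i, 0 ≤ S⁻¹ * cn i := fun i => mul_nonneg (by positivity) (hcn0 i)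
  have hAσ : ∀ i, S⁻¹ * cp i ≠ 0 → i ∈ σ := by
    intro i h
    refine hpos i (hcppos i fun h0 => h ?_)
    rw [h0, mul_zero]
  have hBτ : ∀ i, S⁻¹ * cn i ≠ 0 → i ∈ τ := by
    intro i h
    refine hneg i (hcnneg i fun h0 => h ?_)
    rw [h0, mul_zero]
  have hvAB : ∑ i, (S⁻¹ * cp i) • momentCurve d (t i)
      = ∑ i, (S⁻¹ * cn i) • momentCurve d (t i) := by
    rw [hscale, hscale, hvec]
  have hforce : ∀ ρ : Finset (Fin n), ρ.card ≤ d + 1 → ∀ u w : Fin n → ℝ,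
      (∀ i, u i ≠ 0 → i ∈ ρ) → (∀ i, w i ≠ 0 → i ∈ ρ) →
      (∑ i, u i = 1) → (∑ i, w i = 1) →
      (∑ i, u i • momentCurve d (t i) = ∑ i, w i • momentCurve d (t i)) →
      ∀ i, u i = w i := by
    intro ρ hρ u w hu hw hsu hsw hveq i
    by_contra hne
    have hmomδ := moments_of_weights hsu hsw hveq
    have hcδ : ∃ i, u i - w i ≠ 0 := ⟨i, sub_ne_zero.2 hne⟩
    obtain ⟨v, hvmono, hvne, -⟩ := key_alt ht d hmomδ hcδ
    have hsubρ : ∀ j, v j ∈ ρ := by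
      intro j
      have hvj := hvne j
      by_cases h : u (v j) ≠ 0
      · exact hu _ h
      · push_neg at h
        apply hw
        intro h0
        exact hvj (by simp [h, h0])
    have hcard : (univ.image v).card ≤ ρ.card :=
      Finset.card_le_card fun x hx => by
        obtain ⟨j, -, rfl⟩ := Finset.mem_image.1 hx
        exact hsubρ j
    rw [Finset.card_image_of_injective _ hvmono.injective, card_univ, Fintype.card_fin] at hcard
    omega
  intro hsub
  have hxσ : ∑ i, (S⁻¹ * cp i) • momentCurve d (t i) ∈ mcConv d t σ :=
    mcConv_of_weights hA0 hAσ hsumA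
  have hxτ : ∑ i, (S⁻¹ * cp i) • momentCurve d (t i) ∈ mcConv d t τ := by
    rw [hvAB]
    exact mcConv_of_weights hB0 hBτ hsumB
  obtain ⟨e, he0, heστ, hse, hve⟩ := mcConv_exists_weights (hsub ⟨hxσ, hxτ⟩)
  have hAe := hforce σ hσ (fun i => S⁻¹ * cp i) e hAσ
    (fun i hi => Finset.mem_of_mem_inter_left (heστ i hi)) hsumA hse hve.symm
  have hBe := hforce τ hτ (fun i => S⁻¹ * cn i) e hBτ
    (fun i hi => Finset.mem_of_mem_inter_right (heστ i hi)) hsumB hse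
    (by rw [← hvAB]; exact hve.symm)
  have h1 : S⁻¹ * cp i₁ = S⁻¹ * cn i₁ := (hAe i₁).trans (hBe i₁).symm
  have h2 : cp i₁ = c i₁ := by simp only [hcp]; rw [max_eq_left hi₁.le]
  have h3 : cn i₁ = 0 := by simp only [hcn]; rw [max_eq_right (by linarith : -c i₁ ≤ 0)]
  rw [h2, h3, mul_zero] at h1
  have : c i₁ = 0 := by
    have hS' : S⁻¹ ≠ 0 := inv_ne_zero hSpos.ne'
    exact (mul_eq_zero.1 h1).resolve_left hS'
  linarith

private lemma overlap_of_altseq {d n : ℕ} {t : Fin n → ℝ} (ht : StrictMono t)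
    {σ τ : Finset (Fin n)} (hσ : σ.card ≤ d + 1) (hτ : τ.card ≤ d + 1)
    (h : AltSeq σ τ (d + 2)) : Overlap d t σ τ := by
  classical
  obtain ⟨v, hvmono, hvmem⟩ := h
  set L : (Fin (d + 2) → ℝ) →ₗ[ℝ] (Fin (d + 1) → ℝ) :=
    { toFun := fun c k => ∑ j, c j * t (v j) ^ (k.1 : ℕ)
      map_add' := by
        intro a b
        funext k
        simp only [Pi.add_apply]
        rw [← Finset.sum_add_distrib]
        exact Finset.sum_congr rfl fun j _ => by ring
      map_smul' := by
        intro r a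
        funext k
        simp only [Pi.smul_apply, smul_eq_mul, RingHom.id_apply]
        rw [Finset.mul_sum]
        exact Finset.sum_congr rfl fun j _ => by ring } with hL
  have hni : ¬ Function.Injective L := by
    intro hinj
    have := LinearMap.finrank_le_finrank_of_injective hinj
    rw [Module.finrank_fin_fun, Module.finrank_fin_fun] at this
    omega
  obtain ⟨c1, c2, hc12, hcne⟩ := Function.not_injective_iff.1 hni
  set c : Fin (d + 2) → ℝ := fun j => c1 j - c2 j with hc
  have hcnz : ∃ j, c j ≠ 0 := by
    by_contra h
    push_neg at h
    apply hcne
    funext j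
    have := h j
    simp only [hc] at this
    linarith [sub_eq_zero.1 this]
  have hLc : ∀ k : Fin (d + 1), ∑ j, c j * t (v j) ^ (k.1 : ℕ) = 0 := by
    intro k
    have hk := congrFun hc12 k
    simp only [hL, LinearMap.coe_mk, AddHom.coe_mk] at hk
    have : ∑ j, c j * t (v j) ^ (k.1 : ℕ)
        = (∑ j, c1 j * t (v j) ^ (k.1 : ℕ)) - ∑ j, c2 j * t (v j) ^ (k.1 : ℕ) := by
      rw [← Finset.sum_sub_distrib]
      exact Finset.sum_congr rfl fun j _ => by simp only [hc]; ring
    rw [this, hk, sub_self]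
  set c' : Fin n → ℝ := fun i => ∑ j ∈ univ.filter (fun j => v j = i), c j with hc'
  have hc'v : ∀ j, c' (v j) = c j := by
    intro j
    simp only [hc']
    have : univ.filter (fun j' => v j' = v j) = {j} := by
      ext j'
      simp [hvmono.injective.eq_iff]
    rw [this, Finset.sum_singleton]
  have hmom' : ∀ k ≤ d, ∑ i, c' i * t i ^ k = 0 := by
    intro k hk
    have hfib : ∑ i, ∑ j ∈ univ.filter (fun j => v j = i), (c j * t (v j) ^ k)
        = ∑ j, c j * t (v j) ^ k :=
      Finset.sum_fiberwise_of_maps_to (fun j _ => mem_univ (v j)) _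
    have step : ∀ i : Fin n, c' i * t i ^ k
        = ∑ j ∈ univ.filter (fun j => v j = i), (c j * t (v j) ^ k) := by
      intro i
      simp only [hc']
      rw [Finset.sum_mul]
      exact Finset.sum_congr rfl fun j hj => by rw [(Finset.mem_filter.1 hj).2]
    rw [Finset.sum_congr rfl fun i _ => step i, hfib]
    exact hLc ⟨k, by omega⟩
  have hc'nz : ∃ i, c' i ≠ 0 := by
    obtain ⟨j, hj⟩ := hcnz
    exact ⟨v j, by rw [hc'v j]; exact hj⟩
  obtain ⟨u, humono, hune, hualt⟩ := key_alt ht d hmom' hc'nz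
  have hrange : ∀ i, c' i ≠ 0 → ∃ j : Fin (d + 2), v j = i := by
    intro i hi
    by_contra hnot
    push_neg at hnot
    apply hi
    simp only [hc']
    refine Finset.sum_eq_zero fun j' hj' => ?_
    exact absurd (Finset.mem_filter.1 hj').2 (hnot j')
  have hvcard : (univ.image v).card = d + 2 := by
    rw [Finset.card_image_of_injective _ hvmono.injective, card_univ, Fintype.card_fin]
  have huv : u = v := by
    have h1 := Finset.orderEmbOfFin_unique hvcard
      (f := u) (fun j => by
        obtain ⟨j', hj'⟩ := hrange (u j) (hune j)
        exact hj' ▸ Finset.mem_image_of_mem v (mem_univ j')) humono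
    have h2 := Finset.orderEmbOfFin_unique hvcard
      (f := v) (fun j => Finset.mem_image_of_mem v (mem_univ j)) hvmono
    exact h1.trans h2.symm
  subst huv
  have main : ∀ f : Fin n → ℝ,
      (∀ k ≤ d, ∑ i, f i * t i ^ k = 0) →
      (∀ i, f i ≠ 0 → ∃ j : Fin (d + 2), u j = i) →
      (∀ j : ℕ, ∀ hj : j + 1 < d + 2, f (u ⟨j, by omega⟩) * f (u ⟨j + 1, hj⟩) < 0) →
      0 < f (u ⟨0, by omega⟩) → Overlap d t σ τ := by
    intro f hfmom hfsupp hfalt hf0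
    have hpat := alt_pattern (K := d + 1) (c := f) (v := u) hfalt hf0
    refine overlap_of_dependence ht hσ hτ f hfmom ?_ ?_ ⟨u ⟨0, by omega⟩, hf0⟩
    · intro i hi
      obtain ⟨j, rfl⟩ := hfsupp i hi.ne'
      have hpar : j.1 % 2 = 0 := by
        rcases Nat.mod_two_eq_zero_or_one j.1 with hp | hp
        · exact hp
        · exfalso
          have hj2 := (hpat j.1 j.2).2 hp
          simp only [Fin.eta] at hj2
          linarith
      exact (hvmem j).1 hpar
    · intro i hi
      obtain ⟨j, rfl⟩ := hfsupp i (by intro h0; rw [h0] at hi; exact lt_irrefl _ hi)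
      have hpar : j.1 % 2 = 1 := by
        rcases Nat.mod_two_eq_zero_or_one j.1 with hp | hp
        · exfalso
          have hj1 := (hpat j.1 j.2).1 hp
          simp only [Fin.eta] at hj1
          linarith
        · exact hp
      exact (hvmem j).2 hpar
  rcases (hune ⟨0, by omega⟩).lt_or_gt with hneg | hpos
  · refine main (fun i => -c' i) ?_ ?_ ?_ (by simpa using hneg)
    · intro k hk
      have := hmom' k hk
      rw [← neg_eq_zero, ← Finset.sum_neg_distrib] at this
      convert this using 2 with i
      ring
    · intro i hi
      exact hrange i (fun h0 => hi (by simp only [h0, neg_zero]))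
    · intro j hj
      have := hualt j hj
      simp only [neg_mul_neg]
      exact this
  · exact main c' hmom' hrange hualt hpos

private lemma overlap_symm {d n : ℕ} {t : Fin n → ℝ} {σ τ : Finset (Fin n)}
    (h : Overlap d t σ τ) : Overlap d t τ σ := by
  intro hsub
  apply h
  intro x hx
  have := hsub ⟨hx.2, hx.1⟩
  rwa [Finset.inter_comm] at this

end OverlapAux

/-- **Proposition (overlap criterion).** Two simplices `σ, τ ⊆ [n]` on the moment curve
`γ_d` overlap in `ℝ^d` if and only if they are `(d+2)`-interlacing. -/
theorem overlap_iff_interlacing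
    (d n : ℕ) (t : Fin n → ℝ) (ht : StrictMono t)
    (σ τ : Finset (Fin n)) (hσ : σ.card ≤ d + 1) (hτ : τ.card ≤ d + 1) :
    Overlap d t σ τ ↔ Interlacing σ τ (d + 2) := by
  constructor
  · intro hov
    obtain ⟨x, hx, hxn⟩ := Set.not_subset.1 hov
    obtain ⟨a, ha0, haσ, hsa, hva⟩ := mcConv_exists_weights hx.1
    obtain ⟨b, hb0, hbτ, hsb, hvb⟩ := mcConv_exists_weights hx.2
    have hmomx := moments_of_weights hsa hsb (by rw [hva, hvb])
    have hcne : ∃ i, a i - b i ≠ 0 := by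
      by_contra h
      push_neg at h
      apply hxn
      have hab : ∀ i, a i = b i := fun i => by have := h i; linarith
      rw [← hva]
      refine mcConv_of_weights ha0 ?_ hsa
      intro i hi
      rw [Finset.mem_inter]
      exact ⟨haσ i hi, hbτ i (by rw [← hab i]; exact hi)⟩
    obtain ⟨v, hvmono, hvne, hvalt⟩ := key_alt ht d hmomx hcne
    rcases (hvne ⟨0, by omega⟩).lt_or_gt with hneg | hpos
    · right
      have hvalt' : ∀ j : ℕ, ∀ hj : j + 1 < d + 2,
          (fun i => b i - a i) (v ⟨j, by omega⟩) * (fun i => b i - a i) (v ⟨j + 1, hj⟩) < 0 := by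
        intro j hj
        have := hvalt j hj
        simp only at this ⊢
        nlinarith [this]
      have hneg' : a (v ⟨0, by omega⟩) - b (v ⟨0, by omega⟩) < 0 := hneg
      have hpat := alt_pattern (K := d + 1) (c := fun i => b i - a i) (v := v) hvalt'
        (show (0:ℝ) < b (v ⟨0, by omega⟩) - a (v ⟨0, by omega⟩) by linarith)
      refine ⟨v, hvmono, fun i => ⟨?_, ?_⟩⟩
      · intro hpar
        have hi := (hpat i.1 i.2).1 hpar
        simp only [Fin.eta] at hi
        exact hbτ _ (by have := ha0 (v i); intro h0; rw [h0] at hi; linarith)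
      · intro hpar
        have hi := (hpat i.1 i.2).2 hpar
        simp only [Fin.eta] at hi
        exact haσ _ (by have := hb0 (v i); intro h0; rw [h0] at hi; linarith)
    · left
      have hpat := alt_pattern (K := d + 1) (c := fun i => a i - b i) (v := v) hvalt hpos
      refine ⟨v, hvmono, fun i => ⟨?_, ?_⟩⟩
      · intro hpar
        have hi := (hpat i.1 i.2).1 hpar
        simp only [Fin.eta] at hi
        exact haσ _ (by have := hb0 (v i); intro h0; rw [h0] at hi; linarith)
      · intro hpar
        have hi := (hpat i.1 i.2).2 hpar
        simp only [Fin.eta] at hi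
        exact hbτ _ (by have := ha0 (v i); intro h0; rw [h0] at hi; linarith)
  · intro hint
    rcases hint with h | h
    · exact overlap_of_altseq ht hσ hτ h
    · exact overlap_symm (overlap_of_altseq ht hτ hσ h)
end

section
/- Fix t₁ < ⋯ < t_n and identify i ∈ [n] with γ_d(t_i). Let σ, τ ⊆ [n] be simplices on γ_d that are (d+2)-interlacing via a sequence of type (σ) when d is even, or via a sequence of type (τ) when d is odd. Then there exists a point p ∈ conv(σ) ∩ conv(τ) such that h_σ(p) < h_τ(p). -/
open Finset

open Polynomial in
lemma lagrange_key {N : ℕ} (s : Fin (N + 1) → ℝ) (hs : Function.Injective s)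
    (m : ℕ) (hm : m ≤ N) :
    ∑ k, s k ^ m * ∏ j ∈ univ.erase k, (s k - s j)⁻¹ = if m = N then 1 else 0 := by
  have hinj : Set.InjOn s ↑(univ : Finset (Fin (N + 1))) := hs.injOn
  have hdeg : (X ^ m : ℝ[X]).degree < (#(univ : Finset (Fin (N + 1))) : ℕ) := by
    rw [degree_X_pow, card_univ, Fintype.card_fin]
    exact_mod_cast Nat.lt_succ_of_le hm
  have heq := Lagrange.eq_interpolate (f := (X ^ m : ℝ[X])) hinj hdeg
  have hco := congrArg (fun p : ℝ[X] => p.coeff N) heq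
  simp only [coeff_X_pow, Lagrange.interpolate_apply, finset_sum_coeff, coeff_C_mul,
    eval_pow, eval_X] at hco
  have hbasis : ∀ k : Fin (N + 1),
      (Lagrange.basis univ s k).coeff N = ∏ j ∈ univ.erase k, (s k - s j)⁻¹ := by
    intro k
    have hdb : (Lagrange.basis univ s k).natDegree = N := by
      have := Lagrange.degree_basis hinj (mem_univ k)
      rw [card_univ, Fintype.card_fin] at this
      exact natDegree_eq_of_degree_eq_some this
    have h2 : (Lagrange.basis univ s k).leadingCoeff
        = ∏ j ∈ univ.erase k, (s k - s j)⁻¹ := by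
      rw [Lagrange.basis, leadingCoeff_prod]
      refine Finset.prod_congr rfl fun j hj => ?_
      rw [Lagrange.basisDivisor, leadingCoeff_mul, leadingCoeff_C,
        (monic_X_sub_C (s j)).leadingCoeff, mul_one]
    rw [← h2, leadingCoeff, hdb]
  simp only [hbasis] at hco
  rw [← hco]
  by_cases h : m = N
  · simp [h]
  · rw [if_neg h, if_neg (fun hnm => h hnm.symm)]

lemma erase_eq_Iio_union_Ioi {N : ℕ} (k : Fin (N + 1)) :
    (univ : Finset (Fin (N + 1))).erase k = Iio k ∪ Ioi k := by
  ext j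
  simp only [mem_erase, mem_univ, and_true, mem_union, mem_Iio, mem_Ioi]
  exact ne_iff_lt_or_gt

lemma sign_key {N : ℕ} (s : Fin (N + 1) → ℝ) (hs : StrictMono s) (k : Fin (N + 1)) :
    0 < (-1 : ℝ) ^ (N + k.1) * ∏ j ∈ univ.erase k, (s k - s j)⁻¹ := by
  have hdisj : Disjoint (Iio k) (Ioi k) := by
    simp only [Finset.disjoint_left, mem_Iio, mem_Ioi]
    intro a ha; exact not_lt.mpr (le_of_lt ha)
  have hcard : #(Ioi k) = N - k.1 := by
    rw [Fin.card_Ioi]; omega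
  have hP : 0 < (-1 : ℝ) ^ (N + k.1) * ∏ j ∈ univ.erase k, (s k - s j) := by
    rw [erase_eq_Iio_union_Ioi k, Finset.prod_union hdisj]
    have h1 : 0 < ∏ j ∈ Iio k, (s k - s j) :=
      Finset.prod_pos fun j hj => sub_pos.mpr (hs (mem_Iio.mp hj))
    have h2 : ∏ j ∈ Ioi k, (s k - s j) = (-1 : ℝ) ^ (N - k.1) * ∏ j ∈ Ioi k, (s j - s k) := by
      rw [← hcard, ← prod_const, ← prod_mul_distrib]
      exact prod_congr rfl fun j _ => by ring
    have h3 : 0 < ∏ j ∈ Ioi k, (s j - s k) :=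
      Finset.prod_pos fun j hj => sub_pos.mpr (hs (mem_Ioi.mp hj))
    have hsign : (-1 : ℝ) ^ (N + k.1) * (-1 : ℝ) ^ (N - k.1) = 1 := by
      rw [← pow_add]
      have hk : k.1 ≤ N := Nat.lt_succ_iff.mp k.isLt
      have : N + k.1 + (N - k.1) = 2 * N := by omega
      rw [this]
      exact Even.neg_one_pow (even_two_mul N)
    rw [h2]
    set a : ℝ := (-1) ^ (N + k.1) with ha
    set b : ℝ := (-1) ^ (N - k.1) with hb
    calc (0 : ℝ) < (a * b) * ((∏ j ∈ Iio k, (s k - s j)) * ∏ j ∈ Ioi k, (s j - s k)) := by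
            rw [hsign]; positivity
      _ = a * ((∏ j ∈ Iio k, (s k - s j)) * (b * ∏ j ∈ Ioi k, (s j - s k))) := by ring
  have := inv_pos.mpr hP
  rw [mul_inv, ← Finset.prod_inv_distrib] at this
  have hinv : ((-1 : ℝ) ^ (N + k.1))⁻¹ = (-1 : ℝ) ^ (N + k.1) := by
    rcases neg_one_pow_eq_one_iff_even (R := ℝ) (n := N + k.1) (by norm_num) |>.symm with _
    rcases Nat.even_or_odd (N + k.1) with h | h
    · rw [h.neg_one_pow]; norm_num
    · rw [h.neg_one_pow]; norm_num
  rwa [hinv] at this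

/-- **Proposition (strict height inequality from interlacing).** If simplices `σ, τ ⊆ [n]`
on `γ_d` are `(d+2)`-interlacing via a sequence of type (σ) when `d` is even, resp. of
type (τ) when `d` is odd, then there is a point `p ∈ conv(σ) ∩ conv(τ)` with
`h_σ(p) < h_τ(p)` (phrased via the liftings to `γ_{d+1}`: there are points `q` of the
lifted `σ` and `q'` of the lifted `τ` with the same projection `p` and strictly smaller
last coordinate for `q`). -/
theorem interlacing_implies_strict_height_lt
    (d n : ℕ) (t : Fin n → ℝ) (ht : StrictMono t)
    (σ τ : Finset (Fin n)) (hσ : σ.card ≤ d + 1) (hτ : τ.card ≤ d + 1)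
    (heven : Even d → AltSeq σ τ (d + 2))
    (hodd : ¬ Even d → AltSeq τ σ (d + 2)) :
    ∃ q ∈ mcConv (d + 1) t σ, ∃ q' ∈ mcConv (d + 1) t τ,
      projLast d q = projLast d q' ∧ q (Fin.last d) < q' (Fin.last d) := by
  -- unified alternating sequence
  obtain ⟨v, hvm, hv⟩ : ∃ v : Fin (d + 2) → Fin n, StrictMono v ∧
      ∀ k : Fin (d + 2), (¬ Even (d + 1 + k.1) → v k ∈ σ) ∧ (Even (d + 1 + k.1) → v k ∈ τ) := by
    by_cases he : Even d
    · obtain ⟨v, hm, hv⟩ := heven he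
      have hd : d % 2 = 0 := Nat.even_iff.mp he
      refine ⟨v, hm, fun k => ⟨fun hk => (hv k).1 ?_, fun hk => (hv k).2 ?_⟩⟩
      · rw [Nat.even_iff] at hk; omega
      · rw [Nat.even_iff] at hk; omega
    · obtain ⟨v, hm, hv⟩ := hodd he
      have hd : d % 2 = 1 := Nat.odd_iff.mp (Nat.not_even_iff_odd.mp he)
      refine ⟨v, hm, fun k => ⟨fun hk => (hv k).2 ?_, fun hk => (hv k).1 ?_⟩⟩
      · rw [Nat.even_iff] at hk; omega
      · rw [Nat.even_iff] at hk; omega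
  set s : Fin (d + 1 + 1) → ℝ := fun k => t (v k) with hsdef
  have hsm : StrictMono s := ht.comp hvm
  set μ : Fin (d + 2) → ℝ := fun k => ∏ j ∈ univ.erase k, (s k - s j)⁻¹ with hμdef
  have hkey : ∀ m : ℕ, m ≤ d + 1 →
      ∑ k, s k ^ m * μ k = if m = d + 1 then 1 else 0 :=
    fun m hm => lagrange_key s hsm.injective m hm
  set ε : Fin (d + 2) → ℝ := fun k => (-1 : ℝ) ^ (d + 1 + k.1) with hεdef
  set w : Fin (d + 2) → ℝ := fun k => ε k * μ k with hwdef
  have hw : ∀ k, 0 < w k := fun k => sign_key s hsm k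
  have hεsq : ∀ k, ε k * ε k = 1 := fun k => by
    simp only [hεdef, ← pow_add]
    exact Even.neg_one_pow ⟨d + 1 + k.1, by ring⟩
  have hμw : ∀ k, μ k = ε k * w k := fun k => by
    rw [hwdef]; simp only [← mul_assoc, hεsq k, one_mul]
  set P : Finset (Fin (d + 2)) := univ.filter (fun k => Even (d + 1 + k.1)) with hPdef
  set Q : Finset (Fin (d + 2)) := univ.filter (fun k => ¬ Even (d + 1 + k.1)) with hQdef
  have hεP : ∀ k ∈ P, ε k = 1 := fun k hk => by
    have := (mem_filter.mp hk).2
    simp only [hεdef]; exact this.neg_one_pow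
  have hεQ : ∀ k ∈ Q, ε k = -1 := fun k hk => by
    have := (mem_filter.mp hk).2
    simp only [hεdef]; exact (Nat.not_even_iff_odd.mp this).neg_one_pow
  -- split sums
  have hsplit : ∀ m : ℕ, ∑ k, s k ^ m * μ k
      = (∑ k ∈ P, w k * s k ^ m) - ∑ k ∈ Q, w k * s k ^ m := by
    intro m
    have hPQ := Finset.sum_filter_add_sum_filter_not univ (fun k => Even (d + 1 + k.1))
      (fun k => s k ^ m * μ k)
    have hP' : ∑ k ∈ P, s k ^ m * μ k = ∑ k ∈ P, w k * s k ^ m :=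
      Finset.sum_congr rfl fun k hk => by rw [hμw k, hεP k hk, one_mul, mul_comm]
    have hQ' : ∑ k ∈ Q, s k ^ m * μ k = -∑ k ∈ Q, w k * s k ^ m := by
      rw [← Finset.sum_neg_distrib]
      exact Finset.sum_congr rfl fun k hk => by
        rw [hμw k, hεQ k hk]; ring
    rw [hP', hQ'] at hPQ
    rw [← hPQ]; ring
  -- weight sums are equal and positive
  have hsum0 : (∑ k ∈ P, w k) = ∑ k ∈ Q, w k := by
    have h0 := hkey 0 (Nat.zero_le _)
    rw [if_neg (by omega : ¬(0 : ℕ) = d + 1), hsplit 0] at h0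
    simp only [pow_zero, mul_one] at h0
    linarith
  have hPne : P.Nonempty := by
    refine ⟨⟨(d + 1) % 2, by omega⟩, mem_filter.mpr ⟨mem_univ _, ?_⟩⟩
    have hval : ((⟨(d + 1) % 2, by omega⟩ : Fin (d + 2)) : ℕ) = (d + 1) % 2 := rfl
    rw [Nat.even_iff, hval]; omega
  set S : ℝ := ∑ k ∈ P, w k with hSdef
  have hS : 0 < S := Finset.sum_pos (fun k _ => hw k) hPne
  -- the points
  set z : Fin (d + 2) → (Fin (d + 1) → ℝ) := fun k => momentCurve (d + 1) (t (v k)) with hzdef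
  refine ⟨Q.centerMass w z, ?_, P.centerMass w z, ?_, ?_, ?_⟩
  · exact Finset.centerMass_mem_convexHull _ (fun k _ => (hw k).le)
      (by rw [← hsum0]; exact hS)
      (fun k hk => ⟨v k, (hv k).1 (mem_filter.mp hk).2, rfl⟩)
  · exact Finset.centerMass_mem_convexHull _ (fun k _ => (hw k).le)
      hS (fun k hk => ⟨v k, (hv k).2 (mem_filter.mp hk).2, rfl⟩)
  -- coordinates of centerMass
  all_goals {
  have hcoord : ∀ (A : Finset (Fin (d + 2))) (i : Fin (d + 1)),
      (A.centerMass w z) i = (∑ k ∈ A, w k)⁻¹ * ∑ k ∈ A, w k * s k ^ (i.1 + 1) := by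
    intro A i
    simp only [Finset.centerMass, Pi.smul_apply, smul_eq_mul, Finset.sum_apply, hzdef,
      momentCurve, hsdef]
  have hdiff : ∀ m : ℕ, m ≤ d + 1 →
      (∑ k ∈ P, w k * s k ^ m) = (∑ k ∈ Q, w k * s k ^ m) + (if m = d + 1 then 1 else 0) := by
    intro m hm
    have := hkey m hm
    rw [hsplit m] at this
    linarith [this]
  first
  | · funext i
      have hcs : (i.castSucc : ℕ) = i.1 := rfl
      simp only [projLast, hcoord, ← hsum0]
      rw [hdiff (i.castSucc.1 + 1) (by rw [hcs]; omega),
        if_neg (by rw [hcs]; have := i.isLt; omega)]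
      ring
  | · have hlast : ((Fin.last d : Fin (d + 1)) : ℕ) + 1 = d + 1 := by simp
      rw [hcoord Q (Fin.last d), hcoord P (Fin.last d), ← hsum0, hlast,
        hdiff (d + 1) le_rfl, if_pos rfl]
      have hx : (∑ k ∈ Q, w k * s k ^ (d + 1))
          < (∑ k ∈ Q, w k * s k ^ (d + 1)) + 1 := by linarith
      exact mul_lt_mul_of_pos_left hx (inv_pos.mpr hS) }
end

section
/- Fix t₁ < ⋯ < t_n and identify i ∈ [n] with γ_d(t_i). For any pair of simplices σ, τ ⊆ [n] on γ_d, exactly one of the following four cases occurs: (A) σ and τ do not overlap in ℝ^d (equivalently, they are not (d+2)-interlacing); (B) σ <_{d+1} τ; (C) τ <_{d+1} σ; (D) the liftings σ̂ and τ̂ overlap in ℝ^{d+1} (equivalently, σ and τ are (d+3)-interlacing). -/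
open Finset

/-!
Write points of `conv(σ)` and `conv(τ)` as convex combinations of the nodes `γ_d(t_i)`. Two
weight vectors give the same point of `ℝ^d` exactly when their difference `c` annihilates every
polynomial of degree `≤ d` at the nodes, i.e. its moments `∑ c_i t_i^k`, `k ≤ d`, vanish. A
Descartes-type argument shows that such a nonzero `c` changes sign at least `d + 1` times along the
nodes (otherwise a polynomial of degree `≤ d` with roots at the sign changes pairs positively with
`c`), and on any `d + 2` nodes there is such a `c` with strictly alternating signs, whose
`(d + 1)`-st moment has the sign of its last entry. So overlaps in `ℝ^d` are detected by
`(d + 2)`-interlacing, and comparing heights of the lifts amounts to reading off the sign of the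
`(d + 1)`-st moment; the four cases follow by combining these facts in dimensions `d` and `d + 1`.
-/

open Polynomial

namespace MomentCurve

section Moments

variable {ι : Type*} [Fintype ι] {t : ι → ℝ} {c : ι → ℝ} {m : ℕ}

@[simps]
def moment (t : ι → ℝ) (k : ℕ) : (ι → ℝ) →ₗ[ℝ] ℝ where
  toFun c := ∑ i, c i * t i ^ k
  map_add' c c' := by simp only [Pi.add_apply, add_mul, Finset.sum_add_distrib]
  map_smul' r c := by
    simp only [Pi.smul_apply, smul_eq_mul, mul_assoc, Finset.mul_sum, RingHom.id_apply]

def MomentsVanish (t : ι → ℝ) (m : ℕ) (c : ι → ℝ) : Prop :=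
  ∀ k ≤ m, moment t k c = 0

lemma MomentsVanish.neg (h : MomentsVanish t m c) : MomentsVanish t m (-c) :=
  fun k hk => by rw [map_neg, h k hk, neg_zero]

lemma MomentsVanish.smul (h : MomentsVanish t m c) (r : ℝ) : MomentsVanish t m (r • c) :=
  fun k hk => by rw [map_smul, h k hk, smul_zero]

lemma MomentsVanish.sub {c' : ι → ℝ} (h : MomentsVanish t m c) (h' : MomentsVanish t m c') :
    MomentsVanish t m (c - c') :=
  fun k hk => by rw [map_sub, h k hk, h' k hk, sub_zero]

lemma sum_mul_eval_eq (t : ι → ℝ) (c : ι → ℝ) (P : ℝ[X]) :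
    ∑ i, c i * P.eval (t i) = ∑ k ∈ Finset.range (P.natDegree + 1), P.coeff k * moment t k c := by
  simp only [eval_eq_sum_range, Finset.mul_sum, moment_apply]
  rw [Finset.sum_comm]
  exact Finset.sum_congr rfl fun k _ => Finset.sum_congr rfl fun i _ => by ring

lemma MomentsVanish.sum_mul_eval_eq_zero (h : MomentsVanish t m c) {P : ℝ[X]}
    (hP : P.natDegree ≤ m) : ∑ i, c i * P.eval (t i) = 0 := by
  rw [sum_mul_eval_eq]
  refine Finset.sum_eq_zero fun k hk => ?_
  rw [h k (by rw [Finset.mem_range] at hk; omega), mul_zero]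

lemma MomentsVanish.sum_mul_eval_eq_moment (h : MomentsVanish t m c) {P : ℝ[X]} (hP : P.Monic)
    (hdeg : P.natDegree = m + 1) : ∑ i, c i * P.eval (t i) = moment t (m + 1) c := by
  rw [sum_mul_eval_eq, hdeg, Finset.sum_range_succ, ← hdeg, hP.coeff_natDegree, hdeg, one_mul,
    add_eq_right]
  refine Finset.sum_eq_zero fun k hk => ?_
  rw [h k (by rw [Finset.mem_range] at hk; omega), mul_zero]

lemma MomentsVanish.moment_succ_eq (h : MomentsVanish t m c) {u : Fin (m + 2) → ι}
    (hu : Function.Injective u) (hsupp : ∀ i, c i ≠ 0 → i ∈ Set.range u) :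
    moment t (m + 1) c =
      c (u (Fin.last _)) * ∏ j : Fin (m + 1), (t (u (Fin.last _)) - t (u j.castSucc)) := by
  set P : ℝ[X] := ∏ j : Fin (m + 1), (X - C (t (u j.castSucc)))
  rw [← h.sum_mul_eval_eq_moment (P := P) (monic_prod_X_sub_C _ _) (by simp [P]),
    ← Fintype.sum_of_injective u hu (fun j => c (u j) * P.eval (t (u j))) _
      (fun i hi => by rw [not_imp_comm.1 (hsupp i) hi, zero_mul]) fun _ => rfl,
    Fin.sum_univ_castSucc, Finset.sum_eq_zero, zero_add]
  · simp [P, eval_prod]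
  · intro j _
    rw [eval_prod, Finset.prod_eq_zero (Finset.mem_univ j) (by simp), mul_zero]

lemma exists_sub_eq_smul_of_sum_eq_zero (h0 : ∑ i, c i = 0) (hc : c ≠ 0) :
    ∃ (a b : ι → ℝ) (r : ℝ), 0 < r ∧ (∀ i, 0 ≤ a i) ∧ (∀ i, 0 ≤ b i) ∧
      ∑ i, a i = 1 ∧ ∑ i, b i = 1 ∧ (∀ i, a i ≠ 0 → 0 < c i) ∧ (∀ i, b i ≠ 0 → c i < 0) ∧
      a - b = r • c := by
  set M := ∑ i, (c i)⁺
  have hM : ∑ i, (c i)⁻ = M := by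
    have h0' : ∑ i, ((c i)⁺ - (c i)⁻) = 0 := by simpa only [posPart_sub_negPart] using h0
    rw [Finset.sum_sub_distrib, sub_eq_zero] at h0'
    exact h0'.symm
  have hMpos : 0 < M := by
    obtain ⟨i, hi⟩ := Function.ne_iff.1 hc
    rcases hi.lt_or_gt with h | h
    · rw [← hM]
      exact (negPart_pos h).trans_le
        (Finset.single_le_sum (fun j _ => negPart_nonneg (c j)) (Finset.mem_univ i))
    · exact (posPart_pos h).trans_le
        (Finset.single_le_sum (fun j _ => posPart_nonneg (c j)) (Finset.mem_univ i))
  refine ⟨fun i => (c i)⁺ / M, fun i => (c i)⁻ / M, M⁻¹, inv_pos.2 hMpos,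
    fun i => div_nonneg (posPart_nonneg _) hMpos.le,
    fun i => div_nonneg (negPart_nonneg _) hMpos.le,
    by rw [← Finset.sum_div, div_self hMpos.ne'], by rw [← Finset.sum_div, hM, div_self hMpos.ne'],
    fun i hi => ?_, fun i hi => ?_, ?_⟩
  · by_contra h
    exact hi (show (c i)⁺ / M = 0 by rw [posPart_eq_zero.2 (not_lt.1 h), zero_div])
  · by_contra h
    exact hi (show (c i)⁻ / M = 0 by rw [negPart_eq_zero.2 (not_lt.1 h), zero_div])
  · ext i
    simp only [Pi.sub_apply, Pi.smul_apply, smul_eq_mul, ← sub_div, posPart_sub_negPart]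
    exact div_eq_inv_mul _ _

end Moments

section Alternation

variable {ι : Type*} [Preorder ι] {c : ι → ℝ}

def SignAlternating (c : ι → ℝ) (k : ℕ) : Prop :=
  ∃ v : Fin k → ι, StrictMono v ∧ ∀ j : Fin k, 0 < (-1) ^ (j : ℕ) * c (v j)

lemma SignAlternating.mono {k k' : ℕ} (h : SignAlternating c k) (hk : k' ≤ k) :
    SignAlternating c k' := by
  obtain ⟨v, hv, hs⟩ := h
  exact ⟨v ∘ Fin.castLE hk, hv.comp (Fin.strictMono_castLE hk), fun j => hs (Fin.castLE hk j)⟩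

lemma SignAlternating.card_le {k : ℕ} {s : Finset ι} (h : SignAlternating c k)
    (hs : ∀ i, c i ≠ 0 → i ∈ s) : k ≤ s.card := by
  obtain ⟨v, hv, hsign⟩ := h
  have hmem : ∀ j, v j ∈ s := fun j => hs _ fun h0 => by simpa [h0] using hsign j
  simpa using Finset.card_le_card_of_injOn v (s := Finset.univ) (fun j _ => hmem j)
    hv.injective.injOn

lemma SignAlternating.cons {c' : ι → ℝ} {k : ℕ} {j : ι} (h : SignAlternating c' k) (hj : 0 < c j)
    (hc' : ∀ i, c' i ≠ 0 → j < i ∧ c i = -c' i) : SignAlternating c (k + 1) := by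
  obtain ⟨v, hv, hsign⟩ := h
  have hv' : ∀ l, c' (v l) ≠ 0 := fun l h0 => by simpa [h0] using hsign l
  refine ⟨Fin.cons j v, Fin.strictMono_cons.2 ⟨fun l => (hc' _ (hv' l)).1, hv⟩,
    Fin.cases (by simpa using hj) fun l => ?_⟩
  simpa [(hc' _ (hv' l)).2, pow_succ] using hsign l

/-- A certificate that the moments of `c` up to degree `r` cannot all vanish, since then
`∑ i, c i * P.eval (t i)` would be `0`. -/
def HasPositivePairing (t : ι → ℝ) (j : ι) (c : ι → ℝ) (r : ℕ) : Prop :=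
  ∃ P : ℝ[X], P.natDegree ≤ r ∧ (∀ i < j, 0 ≤ P.eval (t i)) ∧ (∀ i, 0 ≤ c i * P.eval (t i)) ∧
    ∃ i, 0 < c i * P.eval (t i)

end Alternation

section SignChanges

variable {ι : Type*} [LinearOrder ι] {t : ι → ℝ} {c : ι → ℝ}

/- Used with `j₁` the first negative entry of `c` and `jmid` the last nonzero entry before it:
the new root `t jmid` accounts for this sign change, and `P` for those of the flipped tail. -/
theorem hasPositivePairing_succ (ht : StrictMono t) {j jmid j₁ : ι} {r : ℕ} (hj : j ≤ jmid)
    (hjmid : jmid < j₁) (hnonneg : ∀ i < j₁, 0 ≤ c i) (hle : ∀ i < j₁, c i ≠ 0 → i ≤ jmid)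
    (h : HasPositivePairing t j₁ (fun i => if j₁ ≤ i then -c i else 0) r) :
    HasPositivePairing t j c (r + 1) := by
  obtain ⟨P, hdeg, hbelow, hpair, i₀, hi₀⟩ := h
  have hflip : ∀ i, j₁ ≤ i → c i * (C (t jmid) - X).eval (t i) * P.eval (t i) =
      (if j₁ ≤ i then -c i else 0) * P.eval (t i) * (t i - t jmid) := by
    intro i hi; simp only [if_pos hi, eval_sub, eval_C, eval_X]; ring
  refine ⟨(C (t jmid) - X) * P, ?_, fun i hi => ?_, fun i => ?_, i₀, ?_⟩
  · calc ((C (t jmid) - X) * P).natDegree ≤ (C (t jmid) - X).natDegree + P.natDegree :=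
          natDegree_mul_le
      _ ≤ 1 + r := by gcongr; exact (natDegree_sub_le _ _).trans (by simp)
      _ = r + 1 := add_comm 1 r
  · rw [eval_mul, eval_sub, eval_C, eval_X]
    exact mul_nonneg (sub_nonneg.2 (ht.monotone (hi.le.trans hj)))
      (hbelow i (hi.trans_le (hj.trans hjmid.le)))
  · rw [eval_mul, ← mul_assoc]
    by_cases hi : j₁ ≤ i
    · rw [hflip i hi]
      exact mul_nonneg (hpair i) (sub_nonneg.2 (ht.monotone (hjmid.le.trans hi)))
    · push Not at hi
      rcases (hnonneg i hi).eq_or_lt with h | h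
      · simp [← h]
      · rw [eval_sub, eval_C, eval_X]
        exact mul_nonneg (mul_nonneg h.le (sub_nonneg.2 (ht.monotone (hle i hi h.ne'))))
          (hbelow i hi)
  · have hi₀' : j₁ ≤ i₀ := by_contra fun h => by simp [h] at hi₀
    rw [eval_mul, ← mul_assoc, hflip i₀ hi₀']
    exact mul_pos hi₀ (sub_pos.2 (ht (hjmid.trans_le hi₀')))

end SignChanges

section Descartes

variable {ι : Type*} [Fintype ι] [LinearOrder ι] {t : ι → ℝ} {c : ι → ℝ} {m : ℕ}

theorem exists_signAlternating_hasPositivePairing (ht : StrictMono t) (j : ι) :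
    ∀ c : ι → ℝ, 0 < c j → (∀ i < j, c i = 0) →
      ∃ r, SignAlternating c (r + 1) ∧ HasPositivePairing t j c r := by
  induction j using WellFoundedGT.induction with
  | _ j ih =>
  intro c hj hlow
  by_cases hneg : ∃ i, c i < 0
  swap
  · push Not at hneg
    exact ⟨0, ⟨![j], Subsingleton.strictMono (α := Fin 1) _,
      fun l => by simpa [Fin.fin_one_eq_zero l] using hj⟩,
      1, by simp, fun i _ => by simp, fun i => by simpa using hneg i, j, by simpa using hj⟩
  have hN : (Finset.univ.filter fun i => c i < 0).Nonempty := by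
    obtain ⟨i, hi⟩ := hneg; exact ⟨i, by simpa using hi⟩
  set j₁ := (Finset.univ.filter fun i => c i < 0).min' hN
  have hj₁ : c j₁ < 0 := by simpa using Finset.min'_mem _ hN
  have hnonneg : ∀ i < j₁, 0 ≤ c i := fun i hi =>
    not_lt.1 fun h => (Finset.min'_le _ i (by simpa using h)).not_gt hi
  have hjj₁ : j < j₁ := by
    by_contra! h
    rcases h.lt_or_eq with h | h
    · linarith [hlow _ h]
    · rw [h] at hj₁; linarith
  have hB : (Finset.univ.filter fun i => i < j₁ ∧ c i ≠ 0).Nonempty := ⟨j, by simp [hjj₁, hj.ne']⟩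
  set jmid := (Finset.univ.filter fun i => i < j₁ ∧ c i ≠ 0).max' hB
  have hjmid : jmid < j₁ := (Finset.mem_filter.1 (Finset.max'_mem _ hB)).2.1
  have hj_le : j ≤ jmid := Finset.le_max' _ j (by simp [hjj₁, hj.ne'])
  have hle : ∀ i < j₁, c i ≠ 0 → i ≤ jmid := fun i hi hci => Finset.le_max' _ i (by simp [hi, hci])
  obtain ⟨r, halt, hpair⟩ := ih j₁ hjj₁ (fun i => if j₁ ≤ i then -c i else 0)
    (by simpa using hj₁) fun i hi => by simp [not_le.2 hi]
  refine ⟨r + 1, halt.cons hj fun i hi => ?_,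
    hasPositivePairing_succ ht hj_le hjmid hnonneg hle hpair⟩
  have hi' : j₁ ≤ i := by_contra fun h => by simp [h] at hi
  exact ⟨hjj₁.trans_le hi', by simp [hi']⟩

lemma MomentsVanish.signAlternating_of_first_pos (ht : StrictMono t) (h : MomentsVanish t m c)
    {j : ι} (hj : 0 < c j) (hlow : ∀ i < j, c i = 0) : SignAlternating c (m + 2) := by
  obtain ⟨r, halt, P, hdeg, -, hnonneg, i₀, hi₀⟩ :=
    exists_signAlternating_hasPositivePairing ht j c hj hlow
  refine halt.mono ?_
  by_contra! hr
  have hpos : 0 < ∑ i, c i * P.eval (t i) :=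
    Finset.sum_pos' (fun i _ => hnonneg i) ⟨i₀, Finset.mem_univ _, hi₀⟩
  exact hpos.ne' (h.sum_mul_eval_eq_zero (by omega))

theorem MomentsVanish.signAlternating (ht : StrictMono t) (h : MomentsVanish t m c) (hc : c ≠ 0) :
    SignAlternating c (m + 2) ∨ SignAlternating (-c) (m + 2) := by
  have hS : (Finset.univ.filter fun i => c i ≠ 0).Nonempty := by
    obtain ⟨i, hi⟩ := Function.ne_iff.1 hc; exact ⟨i, by simpa using hi⟩
  set j := (Finset.univ.filter fun i => c i ≠ 0).min' hS
  have hlow : ∀ i < j, c i = 0 := fun i hi =>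
    by_contra fun h => (Finset.min'_le _ i (by simpa using h)).not_gt hi
  rcases (show c j ≠ 0 by simpa using Finset.min'_mem _ hS).lt_or_gt with hneg | hpos
  · exact Or.inr (h.neg.signAlternating_of_first_pos ht (j := j) (by simpa using hneg)
      fun i hi => by simp [hlow i hi])
  · exact Or.inl (h.signAlternating_of_first_pos ht hpos hlow)

theorem MomentsVanish.eq_zero_of_support_subset (ht : StrictMono t) (h : MomentsVanish t m c)
    {s : Finset ι} (hs : ∀ i, c i ≠ 0 → i ∈ s) (hcard : s.card ≤ m + 1) : c = 0 := by
  by_contra hc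
  rcases h.signAlternating ht hc with h' | h'
  · have := h'.card_le hs; omega
  · have := h'.card_le fun i hi => hs i (by simpa using hi); omega

theorem exists_momentsVanish_signAlternating_on (ht : StrictMono t) {u : Fin (m + 2) → ι}
    (hu : StrictMono u) :
    ∃ c : ι → ℝ, MomentsVanish t m c ∧ (∀ i, c i ≠ 0 → i ∈ Set.range u) ∧
      ∀ j : Fin (m + 2), 0 < (-1) ^ (j : ℕ) * c (u j) := by
  have hdep :
      ¬ LinearIndependent ℝ fun j : Fin (m + 2) => fun k : Fin (m + 1) => t (u j) ^ (k : ℕ) :=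
    fun h => by simpa using h.fintype_card_le_finrank
  obtain ⟨g, hg, j₀, hj₀⟩ := Fintype.not_linearIndependent_iff.1 hdep
  set c := Function.extend u g 0
  have hc_u : ∀ j, c (u j) = g j := hu.injective.extend_apply g 0
  have hsupp : ∀ i, c i ≠ 0 → i ∈ Set.range u := fun i hi =>
    by_contra fun h => hi (Function.extend_apply' _ _ _ h)
  have hmom : MomentsVanish t m c := fun k hk => by
    rw [moment_apply, ← Fintype.sum_of_injective u hu.injective (fun j => g j * t (u j) ^ k) _
      (fun i hi => by rw [not_imp_comm.1 (hsupp i) hi, zero_mul]) fun j => by rw [hc_u]]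
    simpa using congrFun hg ⟨k, by omega⟩
  have hc : c ≠ 0 := fun h => hj₀ (by rw [← hc_u j₀, h, Pi.zero_apply])
  -- a strictly monotone `m + 2`-tuple with values in `Set.range u` is `u` itself
  have halt_on : ∀ c' : ι → ℝ, (∀ i, c' i ≠ 0 → i ∈ Set.range u) → SignAlternating c' (m + 2) →
      ∀ j : Fin (m + 2), 0 < (-1) ^ (j : ℕ) * c' (u j) := by
    rintro c' hsupp' ⟨v, hv, hsign⟩
    have hvu : v = u := by
      refine (hv.range_inj hu).1 (Set.eq_of_subset_of_ncard_le ?_ ?_ (Set.finite_range u))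
      · rintro _ ⟨l, rfl⟩
        exact hsupp' _ fun h => by simpa [h] using hsign l
      · rw [Set.ncard_range_of_injective hu.injective, Set.ncard_range_of_injective hv.injective]
    rwa [hvu] at hsign
  rcases hmom.signAlternating ht hc with h | h
  · exact ⟨c, hmom, hsupp, halt_on c hsupp h⟩
  · have hsupp' : ∀ i, (-c) i ≠ 0 → i ∈ Set.range u := fun i hi => hsupp i (by simpa using hi)
    exact ⟨-c, hmom.neg, hsupp', halt_on _ hsupp' h⟩

end Descartes

section Geometry

variable {n d : ℕ} {t : Fin n → ℝ} {σ τ : Finset (Fin n)} {a b : Fin n → ℝ}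

def IsConvexWeights (s : Finset (Fin n)) (a : Fin n → ℝ) : Prop :=
  (∀ i, 0 ≤ a i) ∧ (∀ i, a i ≠ 0 → i ∈ s) ∧ ∑ i, a i = 1

lemma IsConvexWeights.mono (ha : IsConvexWeights σ a) (h : σ ⊆ τ) : IsConvexWeights τ a :=
  ⟨ha.1, fun i hi => h (ha.2.1 i hi), ha.2.2⟩

lemma IsConvexWeights.mem_of_sub_pos (ha : IsConvexWeights σ a) (hb : IsConvexWeights τ b)
    {i : Fin n} (h : 0 < (a - b) i) : i ∈ σ :=
  ha.2.1 i fun h0 => by rw [Pi.sub_apply, h0] at h; linarith [hb.1 i]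

lemma IsConvexWeights.mem_of_sub_neg (ha : IsConvexWeights σ a) (hb : IsConvexWeights τ b)
    {i : Fin n} (h : (a - b) i < 0) : i ∈ τ :=
  hb.2.1 i fun h0 => by rw [Pi.sub_apply, h0] at h; linarith [ha.1 i]

theorem mem_mcConv_iff {x : Fin d → ℝ} :
    x ∈ mcConv d t σ ↔ ∃ a, IsConvexWeights σ a ∧ ∑ i, a i • momentCurve d (t i) = x := by
  constructor
  · refine fun hx => convexHull_min
      (t := {y | ∃ a, IsConvexWeights σ a ∧ ∑ i, a i • momentCurve d (t i) = y}) ?_ ?_ hx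
    · rintro _ ⟨i, hi, rfl⟩
      refine ⟨Pi.single i 1, ⟨fun j => ?_, fun j hj => ?_, by simp⟩, by simp⟩
      · by_cases hj : j = i <;> simp [hj]
      · by_cases hji : j = i
        · rwa [hji]
        · simp [hji] at hj
    · rintro _ ⟨a, ha, rfl⟩ _ ⟨b, hb, rfl⟩ θ θ' hθ hθ' hθθ'
      refine ⟨θ • a + θ' • b, ⟨fun i => ?_, fun i hi => ?_, ?_⟩, ?_⟩
      · simpa using add_nonneg (mul_nonneg hθ (ha.1 i)) (mul_nonneg hθ' (hb.1 i))
      · by_contra hiσ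
        have ha0 : a i = 0 := by_contra fun h => hiσ (ha.2.1 i h)
        have hb0 : b i = 0 := by_contra fun h => hiσ (hb.2.1 i h)
        simp [ha0, hb0] at hi
      · simp [Finset.sum_add_distrib, ← Finset.mul_sum, ha.2.2, hb.2.2, hθθ']
      · simp [add_smul, Finset.sum_add_distrib, Finset.smul_sum, smul_smul]
  · rintro ⟨a, ⟨ha0, has, ha1⟩, rfl⟩
    have hzero : ∀ i ∈ Finset.univ, i ∉ σ → a i = 0 := fun i _ hi => by_contra fun h => hi (has i h)
    rw [← Finset.sum_subset (Finset.subset_univ σ) fun i hi hiσ => by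
      rw [hzero i hi hiσ, zero_smul]]
    rw [← Finset.sum_subset (Finset.subset_univ σ) hzero] at ha1
    exact (convex_convexHull ℝ _).sum_mem (fun i _ => ha0 i) ha1
      fun i hi => subset_convexHull ℝ _ ⟨i, hi, rfl⟩

lemma sum_smul_momentCurve_apply (a : Fin n → ℝ) (k : Fin d) :
    (∑ i, a i • momentCurve d (t i)) k = moment t (k + 1) a := by
  simp [Finset.sum_apply, momentCurve]

theorem sum_smul_momentCurve_eq_iff (ha : ∑ i, a i = 1) (hb : ∑ i, b i = 1) :
    ∑ i, a i • momentCurve d (t i) = ∑ i, b i • momentCurve d (t i) ↔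
      MomentsVanish t d (a - b) := by
  constructor
  · rintro h (_ | k) hk
    · simp [Finset.sum_sub_distrib, ha, hb]
    · have := congrFun h ⟨k, by omega⟩
      rw [sum_smul_momentCurve_apply, sum_smul_momentCurve_apply] at this
      rw [map_sub, this, sub_self]
  · intro h
    funext k
    rw [sum_smul_momentCurve_apply, sum_smul_momentCurve_apply, ← sub_eq_zero, ← map_sub]
    exact h _ (by omega)

lemma projLast_sum_smul_momentCurve (a : Fin n → ℝ) :
    projLast d (∑ i, a i • momentCurve (d + 1) (t i)) = ∑ i, a i • momentCurve d (t i) := by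
  funext k
  simp [projLast, Finset.sum_apply, momentCurve]

lemma sum_smul_momentCurve_last (a : Fin n → ℝ) :
    (∑ i, a i • momentCurve (d + 1) (t i)) (Fin.last d) = moment t (d + 1) a :=
  sum_smul_momentCurve_apply a (Fin.last d)

theorem image_projLast_mcConv : projLast d '' mcConv (d + 1) t σ = mcConv d t σ := by
  rw [mcConv, mcConv, show projLast d = LinearMap.funLeft ℝ ℝ Fin.castSucc from rfl,
    LinearMap.image_convexHull, Set.image_image]
  rfl

lemma eq_of_projLast_eq {q q' : Fin (d + 1) → ℝ} (h : projLast d q = projLast d q')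
    (hlast : q (Fin.last d) = q' (Fin.last d)) : q = q' :=
  funext fun i => Fin.lastCases hlast (fun j => congrFun h j) i

end Geometry

section Interlacing

variable {n k k' : ℕ} {σ τ : Finset (Fin n)}

lemma AltSeq.mono (h : AltSeq σ τ k) (hk : k' ≤ k) : AltSeq σ τ k' := by
  obtain ⟨v, hv, hmem⟩ := h
  exact ⟨v ∘ Fin.castLE hk, hv.comp (Fin.strictMono_castLE hk), fun j => hmem (Fin.castLE hk j)⟩

lemma AltSeq.tail (h : AltSeq σ τ (k + 1)) : AltSeq τ σ k := by
  obtain ⟨v, hv, hmem⟩ := h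
  refine ⟨v ∘ Fin.succ, hv.comp (Fin.strictMono_succ), fun j => ⟨fun hj => ?_, fun hj => ?_⟩⟩
  · exact (hmem j.succ).2 (by rw [Fin.val_succ]; omega)
  · exact (hmem j.succ).1 (by rw [Fin.val_succ]; omega)

lemma Interlacing.mono (h : Interlacing σ τ k) (hk : k' ≤ k) : Interlacing σ τ k' :=
  h.imp (AltSeq.mono · hk) (AltSeq.mono · hk)

lemma SignAlternating.altSeq {c : Fin n → ℝ} (h : SignAlternating c k)
    (hpos : ∀ i, 0 < c i → i ∈ σ) (hneg : ∀ i, c i < 0 → i ∈ τ) : AltSeq σ τ k := by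
  obtain ⟨v, hv, hsign⟩ := h
  refine ⟨v, hv, fun j => ⟨fun hj => hpos _ ?_, fun hj => hneg _ ?_⟩⟩
  · simpa [(Nat.even_iff.2 hj).neg_one_pow] using hsign j
  · simpa [(Nat.odd_iff.2 hj).neg_one_pow] using hsign j

theorem interlacing_of_momentsVanish {m : ℕ} {t c : Fin n → ℝ} (ht : StrictMono t)
    (h : MomentsVanish t m c) (hc : c ≠ 0) (hpos : ∀ i, 0 < c i → i ∈ σ)
    (hneg : ∀ i, c i < 0 → i ∈ τ) : Interlacing σ τ (m + 2) :=
  (h.signAlternating ht hc).imp (·.altSeq hpos hneg)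
    (·.altSeq (fun i hi => hneg i (by simpa using hi)) fun i hi => hpos i (by simpa using hi))

end Interlacing

section Overlap

variable {n d m : ℕ} {t : Fin n → ℝ} {σ τ s : Finset (Fin n)} {a b : Fin n → ℝ}

lemma Overlap.symm (h : Overlap d t σ τ) : Overlap d t τ σ := by
  rw [Overlap, Finset.inter_comm, Set.inter_comm]
  exact h

theorem eq_of_sum_smul_momentCurve_eq (ht : StrictMono t) (hs : s.card ≤ d + 1)
    (ha : IsConvexWeights s a) (hb : IsConvexWeights s b)
    (h : ∑ i, a i • momentCurve d (t i) = ∑ i, b i • momentCurve d (t i)) : a = b := by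
  refine sub_eq_zero.1 (((sum_smul_momentCurve_eq_iff ha.2.2 hb.2.2).1 h).eq_zero_of_support_subset
    ht (fun i hi => ?_) hs)
  by_contra his
  have ha0 : a i = 0 := by_contra fun h => his (ha.2.1 i h)
  have hb0 : b i = 0 := by_contra fun h => his (hb.2.1 i h)
  simp [ha0, hb0] at hi

theorem mcConv_inter_subset_of_not_interlacing (ht : StrictMono t)
    (h : ¬ Interlacing σ τ (d + 2)) : mcConv d t σ ∩ mcConv d t τ ⊆ mcConv d t (σ ∩ τ) := by
  rintro x ⟨hxσ, hxτ⟩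
  obtain ⟨a, ha, rfl⟩ := mem_mcConv_iff.1 hxσ
  obtain ⟨b, hb, hba⟩ := mem_mcConv_iff.1 hxτ
  have hab : a = b := by
    by_contra hne
    exact h (interlacing_of_momentsVanish ht
      ((sum_smul_momentCurve_eq_iff ha.2.2 hb.2.2).1 hba.symm) (sub_ne_zero.2 hne)
      (fun i => ha.mem_of_sub_pos hb) fun i => ha.mem_of_sub_neg hb)
  subst hab
  exact mem_mcConv_iff.2
    ⟨a, ⟨ha.1, fun i hi => Finset.mem_inter.2 ⟨ha.2.1 i hi, hb.2.1 i hi⟩, ha.2.2⟩, rfl⟩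

theorem exists_convexWeights_of_altSeq (ht : StrictMono t) (h : AltSeq σ τ (m + 2)) :
    ∃ a b, IsConvexWeights σ a ∧ IsConvexWeights τ b ∧ MomentsVanish t m (a - b) ∧
      0 < (-1) ^ (m + 1) * moment t (m + 1) (a - b) := by
  obtain ⟨u, hu, hmem⟩ := h
  obtain ⟨c, hmom, hsupp, hsign⟩ := exists_momentsVanish_signAlternating_on ht hu
  have hc : c ≠ 0 := fun h0 => by simpa [h0] using hsign 0
  obtain ⟨a, b, r, hr, ha0, hb0, ha1, hb1, hac, hbc, hab⟩ :=
    exists_sub_eq_smul_of_sum_eq_zero (by simpa using hmom 0 (Nat.zero_le m)) hc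
  have hpos : ∀ i, 0 < c i → i ∈ σ := by
    intro i hi
    obtain ⟨j, rfl⟩ := hsupp i hi.ne'
    refine (hmem j).1 (Nat.mod_two_ne_one.1 fun hj => ?_)
    have := hsign j
    rw [(Nat.odd_iff.2 hj).neg_one_pow] at this
    linarith
  have hneg : ∀ i, c i < 0 → i ∈ τ := by
    intro i hi
    obtain ⟨j, rfl⟩ := hsupp i hi.ne
    refine (hmem j).2 (Nat.mod_two_ne_zero.1 fun hj => ?_)
    have := hsign j
    rw [(Nat.even_iff.2 hj).neg_one_pow] at this
    linarith
  refine ⟨a, b, ⟨ha0, fun i hi => hpos i (hac i hi), ha1⟩,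
    ⟨hb0, fun i hi => hneg i (hbc i hi), hb1⟩, hab ▸ hmom.smul r, ?_⟩
  have hprod : 0 < ∏ j : Fin (m + 1), (t (u (Fin.last _)) - t (u j.castSucc)) :=
    Finset.prod_pos fun j _ => sub_pos.2 (ht (hu (Fin.castSucc_lt_last j)))
  have hlast := hsign (Fin.last _)
  rw [Fin.val_last] at hlast
  rw [hab, map_smul, hmom.moment_succ_eq hu.injective hsupp, smul_eq_mul,
    show ∀ x y z : ℝ, x * (r * (y * z)) = r * (x * y) * z by intros; ring]
  exact mul_pos (mul_pos hr hlast) hprod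

theorem overlap_of_altSeq (ht : StrictMono t) (h : AltSeq σ τ (d + 2)) (hσ : σ.card ≤ d + 1)
    (hτ : τ.card ≤ d + 1) : Overlap d t σ τ := by
  obtain ⟨a, b, ha, hb, hmom, hsign⟩ := exists_convexWeights_of_altSeq ht h
  have hx := (sum_smul_momentCurve_eq_iff ha.2.2 hb.2.2).2 hmom
  intro hsub
  obtain ⟨w, hw, hwx⟩ := mem_mcConv_iff.1
    (hsub ⟨mem_mcConv_iff.2 ⟨a, ha, rfl⟩, mem_mcConv_iff.2 ⟨b, hb, hx.symm⟩⟩)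
  have haw : a = w := eq_of_sum_smul_momentCurve_eq ht hσ ha (hw.mono Finset.inter_subset_left)
    hwx.symm
  have hbw : b = w := eq_of_sum_smul_momentCurve_eq ht hτ hb (hw.mono Finset.inter_subset_right)
    (hx.symm.trans hwx.symm)
  rw [haw, hbw, sub_self, map_zero, mul_zero] at hsign
  exact lt_irrefl 0 hsign

theorem overlap_iff_interlacing (ht : StrictMono t) (hσ : σ.card ≤ d + 1) (hτ : τ.card ≤ d + 1) :
    Overlap d t σ τ ↔ Interlacing σ τ (d + 2) := by
  refine ⟨fun h => by_contra fun hno => h (mcConv_inter_subset_of_not_interlacing ht hno), ?_⟩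
  rintro (h | h)
  · exact overlap_of_altSeq ht h hσ hτ
  · exact Overlap.symm (overlap_of_altSeq ht h hτ hσ)

end Overlap

section Height

variable {n d : ℕ} {t : Fin n → ℝ} {σ τ : Finset (Fin n)}

theorem exists_lifts_of_altSeq (ht : StrictMono t) (h : AltSeq σ τ (d + 2)) :
    ∃ q ∈ mcConv (d + 1) t σ, ∃ q' ∈ mcConv (d + 1) t τ, projLast d q = projLast d q' ∧
      0 < (-1) ^ (d + 1) * (q (Fin.last d) - q' (Fin.last d)) := by
  obtain ⟨a, b, ha, hb, hmom, hsign⟩ := exists_convexWeights_of_altSeq ht h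
  refine ⟨_, mem_mcConv_iff.2 ⟨a, ha, rfl⟩, _, mem_mcConv_iff.2 ⟨b, hb, rfl⟩, ?_, ?_⟩
  · rw [projLast_sum_smul_momentCurve, projLast_sum_smul_momentCurve]
    exact (sum_smul_momentCurve_eq_iff ha.2.2 hb.2.2).2 hmom
  · rwa [sum_smul_momentCurve_last, sum_smul_momentCurve_last, ← map_sub]

theorem not_heightLE_of_altSeq (ht : StrictMono t) (h : AltSeq σ τ (d + 2)) :
    (Odd d → ¬ HeightLE d t σ τ) ∧ (Even d → ¬ HeightLE d t τ σ) := by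
  obtain ⟨q, hq, q', hq', hproj, hsign⟩ := exists_lifts_of_altSeq ht h
  refine ⟨fun hd hle => ?_, fun hd hle => ?_⟩
  · have := hle q hq q' hq' hproj
    rw [hd.add_one.neg_one_pow] at hsign
    linarith
  · have := hle q' hq' q hq hproj.symm
    rw [hd.add_one.neg_one_pow] at hsign
    linarith

theorem not_heightLE_of_interlacing (ht : StrictMono t) (h : Interlacing σ τ (d + 3)) :
    ¬ HeightLE d t σ τ ∧ ¬ HeightLE d t τ σ := by
  -- the two windows of length `d + 2` of the alternation start in `σ` and in `τ` respectively
  have key : ∀ {σ τ : Finset (Fin n)}, AltSeq σ τ (d + 3) →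
      ¬ HeightLE d t σ τ ∧ ¬ HeightLE d t τ σ := fun {σ τ} h => by
    have h₁ := not_heightLE_of_altSeq ht (AltSeq.mono h (Nat.le_succ (d + 2)))
    have h₂ := not_heightLE_of_altSeq ht (AltSeq.tail h)
    rcases Nat.even_or_odd d with hd | hd
    · exact ⟨h₂.2 hd, h₁.2 hd⟩
    · exact ⟨h₁.1 hd, h₂.1 hd⟩
  exact h.elim key fun h => (key h).symm

theorem exists_momentsVanish_of_not_heightLE (h : ¬ HeightLE d t σ τ) :
    ∃ c, MomentsVanish t d c ∧ (∀ i, 0 < c i → i ∈ σ) ∧ (∀ i, c i < 0 → i ∈ τ) ∧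
      0 < moment t (d + 1) c := by
  simp only [HeightLE, not_forall, not_le, exists_prop] at h
  obtain ⟨q, hq, q', hq', hproj, hlt⟩ := h
  obtain ⟨a, ha, rfl⟩ := mem_mcConv_iff.1 hq
  obtain ⟨b, hb, rfl⟩ := mem_mcConv_iff.1 hq'
  rw [projLast_sum_smul_momentCurve, projLast_sum_smul_momentCurve,
    sum_smul_momentCurve_eq_iff ha.2.2 hb.2.2] at hproj
  rw [sum_smul_momentCurve_last, sum_smul_momentCurve_last] at hlt
  exact ⟨a - b, hproj, fun i => ha.mem_of_sub_pos hb, fun i => ha.mem_of_sub_neg hb,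
    by rw [map_sub]; linarith⟩

theorem heightLE_or_heightLE (ht : StrictMono t) (hσ : σ.card ≤ d + 1)
    (hno : ¬ Interlacing σ τ (d + 3)) : HeightLE d t σ τ ∨ HeightLE d t τ σ := by
  by_contra! h
  obtain ⟨c, hc, hcσ, hcτ, hD⟩ := exists_momentsVanish_of_not_heightLE h.1
  obtain ⟨c', hc', hc'τ, hc'σ, hD'⟩ := exists_momentsVanish_of_not_heightLE h.2
  set D := moment t (d + 1) c
  set D' := moment t (d + 1) c'
  -- `e` is chosen so that its `(d + 1)`-st moment vanishes too
  set e := D' • c - D • c'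
  have he : MomentsVanish t (d + 1) e := by
    intro k hk
    rcases hk.lt_or_eq with hk | rfl
    · exact (hc.smul D').sub (hc'.smul D) k (by omega)
    · simp only [e, map_sub, map_smul, smul_eq_mul, D, D', mul_comm, sub_self]
  have hepos : ∀ i, 0 < e i → i ∈ σ := by
    intro i hi
    simp only [e, Pi.sub_apply, Pi.smul_apply, smul_eq_mul] at hi
    rcases lt_or_ge 0 (c i) with h | h
    · exact hcσ i h
    · exact hc'σ i (by nlinarith)
  have heneg : ∀ i, e i < 0 → i ∈ τ := by
    intro i hi
    simp only [e, Pi.sub_apply, Pi.smul_apply, smul_eq_mul] at hi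
    rcases lt_or_ge (c i) 0 with h | h
    · exact hcτ i h
    · exact hc'τ i (by nlinarith)
  have he0 : e = 0 := by_contra fun hne => hno (interlacing_of_momentsVanish ht he hne hepos heneg)
  have hsupp : ∀ i, c i ≠ 0 → i ∈ σ := by
    intro i hi
    have hei := congrFun he0 i
    simp only [e, Pi.sub_apply, Pi.smul_apply, smul_eq_mul, Pi.zero_apply] at hei
    rcases hi.lt_or_gt with h | h
    · exact hc'σ i (by nlinarith)
    · exact hcσ i h
  exact hD.ne' (by simp only [D, hc.eq_zero_of_support_subset ht hsupp hσ, map_zero])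

theorem overlap_succ_of_heightLE_of_heightLE (hov : Overlap d t σ τ) (h₁ : HeightLE d t σ τ)
    (h₂ : HeightLE d t τ σ) : Overlap (d + 1) t σ τ := by
  obtain ⟨x, ⟨hxσ, hxτ⟩, hx⟩ := Set.not_subset.1 hov
  rw [← image_projLast_mcConv] at hxσ hxτ
  obtain ⟨q, hq, rfl⟩ := hxσ
  obtain ⟨q', hq', hqq'⟩ := hxτ
  obtain rfl : q' = q :=
    eq_of_projLast_eq hqq' (le_antisymm (h₂ q' hq' q hq hqq') (h₁ q hq q' hq' hqq'.symm))
  exact fun hsub => hx (image_projLast_mcConv ▸ ⟨q', hsub ⟨hq, hq'⟩, rfl⟩)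

end Height

end MomentCurve

open MomentCurve in
/-- **Corollary (four mutually exclusive cases).** For any pair of simplices `σ, τ ⊆ [n]`
on `γ_d`, exactly one of the following holds:
(A) `σ` and `τ` do not overlap in `ℝ^d` (equivalently, are not `(d+2)`-interlacing);
(B) `σ <_{d+1} τ`; (C) `τ <_{d+1} σ`;
(D) the liftings overlap in `ℝ^{d+1}` (equivalently, `σ, τ` are `(d+3)`-interlacing). -/
theorem four_exclusive_cases
    (d n : ℕ) (t : Fin n → ℝ) (ht : StrictMono t)
    (σ τ : Finset (Fin n)) (hσ : σ.card ≤ d + 1) (hτ : τ.card ≤ d + 1) :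
    (¬ Overlap d t σ τ ↔ ¬ Interlacing σ τ (d + 2)) ∧
    (Overlap (d + 1) t σ τ ↔ Interlacing σ τ (d + 3)) ∧
    (¬ Overlap d t σ τ ∨ HeightLT d t σ τ ∨ HeightLT d t τ σ ∨ Overlap (d + 1) t σ τ) ∧
    ¬ (¬ Overlap d t σ τ ∧ HeightLT d t σ τ) ∧
    ¬ (¬ Overlap d t σ τ ∧ HeightLT d t τ σ) ∧
    ¬ (¬ Overlap d t σ τ ∧ Overlap (d + 1) t σ τ) ∧
    ¬ (HeightLT d t σ τ ∧ HeightLT d t τ σ) ∧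
    ¬ (HeightLT d t σ τ ∧ Overlap (d + 1) t σ τ) ∧
    ¬ (HeightLT d t τ σ ∧ Overlap (d + 1) t σ τ) := by
  have hA : Overlap d t σ τ ↔ Interlacing σ τ (d + 2) := overlap_iff_interlacing ht hσ hτ
  have hD : Overlap (d + 1) t σ τ ↔ Interlacing σ τ (d + 3) :=
    overlap_iff_interlacing ht (by omega) (by omega)
  have hDA : Overlap (d + 1) t σ τ → Overlap d t σ τ := fun h =>
    hA.2 (Interlacing.mono (hD.1 h) (Nat.le_succ _))
  have hBD : HeightLT d t σ τ → ¬ Overlap (d + 1) t σ τ := fun h hov =>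
    (not_heightLE_of_interlacing ht (hD.1 hov)).1 h.2
  have hCD : HeightLT d t τ σ → ¬ Overlap (d + 1) t σ τ := fun h hov =>
    (not_heightLE_of_interlacing ht (hD.1 hov)).2 h.2
  refine ⟨not_congr hA, hD, ?_, fun h => h.1 h.2.1, fun h => h.1 (Overlap.symm h.2.1),
    fun h => h.1 (hDA h.2),
    fun ⟨hB, hC⟩ => hBD hB (overlap_succ_of_heightLE_of_heightLE hB.1 hB.2 hC.2),
    fun h => hBD h.1 h.2, fun h => hCD h.1 h.2⟩
  by_cases hov : Overlap d t σ τ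
  · by_cases hov' : Overlap (d + 1) t σ τ
    · exact Or.inr (Or.inr (Or.inr hov'))
    · rcases heightLE_or_heightLE ht hσ (mt hD.2 hov') with h | h
      · exact Or.inr (Or.inl ⟨hov, h⟩)
      · exact Or.inr (Or.inr (Or.inl ⟨Overlap.symm hov, h⟩))
  · exact Or.inl hov
end

section
/- Fix t₁ < ⋯ < t_n and identify i ∈ [n] with γ_d(t_i). The relation ⪯_{d+1} is a partial order on the set of simplices on γ_d with vertices in [n]: it is reflexive, transitive, and antisymmetric. Equivalently, for every k ≥ 1 there is no cyclic sequence of simplices σ₀ <_{d+1} σ₁ <_{d+1} ⋯ <_{d+1} σ_{k-1} <_{d+1} σ_k = σ₀ with σ₀, …, σ_{k-1} all distinct. -/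
open Finset

/-- `<_{d+1}` restricted to simplices on `γ_d` (index sets of size at most `d+1`). -/
def HeightLTSimplex (d : ℕ) {n : ℕ} (t : Fin n → ℝ) (σ τ : Finset (Fin n)) : Prop :=
  σ.card ≤ d + 1 ∧ τ.card ≤ d + 1 ∧ HeightLT d t σ τ

/-- `σ ⪯_{d+1} τ`: the reflexive-transitive closure of `<_{d+1}` on simplices. -/
def PrecEq (d : ℕ) {n : ℕ} (t : Fin n → ℝ) :
    Finset (Fin n) → Finset (Fin n) → Prop :=
  Relation.ReflTransGen (HeightLTSimplex d t)

namespace POProof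
variable {n : ℕ}

/-- Descending list, alternating membership: head ∈ τ, next ∈ σ, ... -/
def altR (σ τ : Finset (Fin n)) : List (Fin n) → Prop
  | [] => True
  | a :: L => a ∈ τ ∧ (∀ b ∈ L.head?, b < a) ∧ altR τ σ L

@[simp] lemma altR_nil (σ τ : Finset (Fin n)) : altR σ τ [] := trivial

lemma altR_cons {σ τ : Finset (Fin n)} {a : Fin n} {L : List (Fin n)} :
    altR σ τ (a :: L) ↔ a ∈ τ ∧ (∀ b ∈ L.head?, b < a) ∧ altR τ σ L := Iff.rfl

/-- `A σ τ`: exists a descending alternation of length `d+2` with top in `τ`. -/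
def AP (d : ℕ) (σ τ : Finset (Fin n)) : Prop :=
  ∃ L : List (Fin n), altR σ τ L ∧ L.length = d + 2

lemma altR_take {L : List (Fin n)} :
    ∀ {σ τ : Finset (Fin n)} (k : ℕ), altR σ τ L → altR σ τ (L.take k) := by
  induction L with
  | nil => intro σ τ k _; simp
  | cons a L ih =>
    intro σ τ k h
    rcases h with ⟨ha, hb, ht⟩
    cases k with
    | zero => simp
    | succ k =>
      refine ⟨ha, ?_, ih k ht⟩
      intro b hb'
      apply hb
      rcases L with _ | ⟨c, L'⟩
      · simp at hb'
      · cases k <;> simpa using hb'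

lemma altR_mem_union {L : List (Fin n)} :
    ∀ {σ τ : Finset (Fin n)}, altR σ τ L → ∀ a ∈ L, a ∈ σ ∪ τ := by
  induction L with
  | nil => intro σ τ _ a ha; simp at ha
  | cons b L ih =>
    intro σ τ h a ha
    rcases h with ⟨hb, _, ht⟩
    rcases List.mem_cons.1 ha with rfl | ha'
    · exact Finset.mem_union_right _ hb
    · have := ih ht a ha'
      rw [Finset.union_comm]; exact this

lemma altR_chain {L : List (Fin n)} :
    ∀ {σ τ : Finset (Fin n)}, altR σ τ L → L.Chain' (fun a b => b < a) := by
  induction L with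
  | nil => intro σ τ _; exact List.isChain_nil
  | cons a L ih =>
    intro σ τ h
    rcases h with ⟨_, hb, ht⟩
    rcases L with _ | ⟨c, L'⟩
    · exact List.isChain_singleton _
    · exact List.isChain_cons_cons.2 ⟨hb c rfl, ih ht⟩

lemma altR_of_common {L : List (Fin n)} :
    ∀ {σ τ : Finset (Fin n)}, L.Chain' (fun a b => b < a) →
      (∀ a ∈ L, a ∈ σ ∧ a ∈ τ) → altR σ τ L := by
  induction L with
  | nil => intro σ τ _ _; simp
  | cons a L ih =>
    intro σ τ hc hm
    refine ⟨(hm a (by simp)).2, ?_, ih hc.tail ?_⟩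
    · intro b hb
      rcases L with _ | ⟨c, L'⟩
      · simp at hb
      · simp at hb; subst hb; exact (List.isChain_cons_cons.1 hc).1
    · intro a' ha'
      exact ⟨(hm a' (List.mem_cons_of_mem _ ha')).2, (hm a' (List.mem_cons_of_mem _ ha')).1⟩

lemma altR_append {L₁ L₂ : List (Fin n)} :
    ∀ {σ τ : Finset (Fin n)}, altR σ τ L₁ →
      ((Even L₁.length ∧ altR σ τ L₂) ∨ (¬ Even L₁.length ∧ altR τ σ L₂)) →
      (∀ a ∈ L₁.getLast?, ∀ b ∈ L₂.head?, b < a) →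
      altR σ τ (L₁ ++ L₂) := by
  induction L₁ with
  | nil =>
    intro σ τ _ h2 _
    rcases h2 with ⟨_, h⟩ | ⟨he, _⟩
    · simpa using h
    · exact absurd (by simp : Even ([] : List (Fin n)).length) he
  | cons a L₁ ih =>
    intro σ τ h1 h2 hj
    rcases h1 with ⟨ha, hb, ht⟩
    refine ⟨ha, ?_, ?_⟩
    · intro b hb'
      rcases L₁ with _ | ⟨c, L₁'⟩
      · change b ∈ L₂.head? at hb'
        exact hj a (by simp) b hb'
      · have : b = c := by
          simpa using hb'.symm
        exact hb b (by simp [this])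
    · apply ih ht ?_ ?_
      · rcases h2 with ⟨he, h⟩ | ⟨he, h⟩
        · right
          refine ⟨?_, h⟩
          simp only [List.length_cons] at he
          rcases Nat.even_add_one.mp he with h'
          exact h'
        · left
          refine ⟨?_, h⟩
          simp only [List.length_cons] at he
          by_contra h'
          exact he (Nat.even_add_one.mpr h')
      · intro x hx b hb'
        apply hj x ?_ b hb'
        rcases L₁ with _ | ⟨c, L₁'⟩
        · simp at hx
        · rw [show ((a :: c :: L₁').getLast? = (c :: L₁').getLast?) from List.getLast?_cons_cons ..]
          exact hx

lemma altR_split {L₁ L₂ : List (Fin n)} :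
    ∀ {σ τ : Finset (Fin n)}, altR σ τ (L₁ ++ L₂) →
      altR σ τ L₁ ∧
      ((Even L₁.length ∧ altR σ τ L₂) ∨ (¬ Even L₁.length ∧ altR τ σ L₂)) := by
  induction L₁ with
  | nil =>
    intro σ τ h
    exact ⟨trivial, Or.inl ⟨by simp, by simpa using h⟩⟩
  | cons a L₁ ih =>
    intro σ τ h
    rcases h with ⟨ha, hb, ht⟩
    obtain ⟨h1, h2⟩ := ih ht
    constructor
    · refine ⟨ha, ?_, h1⟩
      intro b hb'
      apply hb
      rcases L₁ with _ | ⟨c, L₁'⟩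
      · simp at hb'
      · simpa using hb'
    · rcases h2 with ⟨he, h⟩ | ⟨he, h⟩
      · right
        exact ⟨by simp [Nat.even_add_one, he], h⟩
      · left
        refine ⟨?_, h⟩
        simp [Nat.even_add_one, he]


lemma altR_get {L : List (Fin n)} :
    ∀ {σ τ : Finset (Fin n)}, altR σ τ L → ∀ (p : ℕ) (hp : p < L.length),
      (Even p → L.get ⟨p, hp⟩ ∈ τ) ∧ (¬ Even p → L.get ⟨p, hp⟩ ∈ σ) := by
  induction L with
  | nil => intro σ τ _ p hp; simp at hp
  | cons a L ih =>
    intro σ τ h p hp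
    obtain ⟨ha, _, ht⟩ := h
    cases p with
    | zero =>
      constructor
      · intro _; simpa using ha
      · intro hne; exact absurd Even.zero hne
    | succ p =>
      have hp' : p < L.length := by simpa using hp
      have := ih ht p hp'
      constructor
      · intro hev
        have : ¬ Even p := by
          rw [Nat.even_add_one] at hev
          exact hev
        simpa using (ih ht p hp').2 this
      · intro hodd
        have : Even p := by
          by_contra hc
          exact hodd (Nat.even_add_one.2 hc)
        simpa using (ih ht p hp').1 this

section Vdm
variable {d : ℕ} {t : Fin n → ℝ} {σ τ : Finset (Fin n)}

/-- From a descending alternation of length `d+2` whose *top* element lies in `σ`,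
produce points violating `HeightLE σ τ`. -/
lemma not_heightLE_of_AP (ht : StrictMono t) (hA : AP d τ σ) :
    ¬ HeightLE d t σ τ := by
  classical
  obtain ⟨L, hL, hlen⟩ := hA
  intro hle
  -- ascending reindexing of L
  have hlget : ∀ i : Fin (d+2), (d + 1 - (i:ℕ)) < L.length := by
    intro i; rw [hlen]; omega
  set w : Fin (d+2) → Fin n := fun i => L.get ⟨d + 1 - (i:ℕ), hlget i⟩ with hw
  have hpair : List.Pairwise (fun a b => b < a) L := by
    haveI : IsTrans (Fin n) (fun a b : Fin n => b < a) := ⟨fun _ _ _ h1 h2 => lt_trans h2 h1⟩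
    exact (List.isChain_iff_pairwise).1 (altR_chain hL)
  have hwmono : StrictMono w := by
    intro i j hij
    have h1 : (d + 1 - (j:ℕ)) < d + 1 - (i:ℕ) := by
      have := i.2; have := j.2; omega
    exact (List.pairwise_iff_get.1 hpair) ⟨_, hlget j⟩ ⟨_, hlget i⟩ h1
  have hrole : ∀ i : Fin (d+2),
      (Even (d + 1 - (i:ℕ)) → w i ∈ σ) ∧ (¬ Even (d + 1 - (i:ℕ)) → w i ∈ τ) :=
    fun i => altR_get hL (d + 1 - (i:ℕ)) (hlget i)
  set x : Fin (d+2) → ℝ := fun i => t (w i) with hx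
  have hxmono : StrictMono x := fun i j hij => ht (hwmono hij)
  set M : Matrix (Fin (d+2)) (Fin (d+2)) ℝ := Matrix.vandermonde x with hM
  set η : Fin (d+2) → ℝ := fun i =>
    (-1) ^ ((i:ℕ) + (d+1)) *
      (Matrix.vandermonde (fun j : Fin (d+1) => x (Fin.succAbove i j))).det with hη
  have hminor_pos : ∀ i : Fin (d+2),
      0 < (Matrix.vandermonde (fun j : Fin (d+1) => x (Fin.succAbove i j))).det := by
    intro i
    rw [Matrix.det_vandermonde]
    apply Finset.prod_pos
    intro a _
    apply Finset.prod_pos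
    intro b hb
    have hab : a < b := Finset.mem_Ioi.1 hb
    have : x (Fin.succAbove i a) < x (Fin.succAbove i b) :=
      hxmono ((Fin.strictMono_succAbove i) hab)
    linarith
  have hdet_pos : 0 < M.det := by
    rw [hM, Matrix.det_vandermonde]
    apply Finset.prod_pos
    intro a _
    apply Finset.prod_pos
    intro b hb
    have hab : a < b := Finset.mem_Ioi.1 hb
    have := hxmono hab
    linarith
  -- moment identities
  have hmom : ∀ k : Fin (d+2),
      ∑ i, η i * x i ^ (k:ℕ) = if k = Fin.last (d+1) then M.det else 0 := by
    intro k
    have hlap := Matrix.det_succ_column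
      (M.updateCol (Fin.last (d+1)) (fun i => x i ^ (k:ℕ))) (Fin.last (d+1))
    have hsub : ∀ i : Fin (d+2),
        (M.updateCol (Fin.last (d+1)) (fun i => x i ^ (k:ℕ))).submatrix
          i.succAbove (Fin.last (d+1)).succAbove
        = Matrix.vandermonde (fun j : Fin (d+1) => x (Fin.succAbove i j)) := by
      intro i
      ext a b
      rw [Fin.succAbove_last]
      simp only [Matrix.submatrix_apply]
      rw [Matrix.updateCol_ne (Fin.castSucc_lt_last b).ne]
      rw [hM]
      simp [Matrix.vandermonde]
    have hepow : ∀ i : Fin (d+2), ((i:ℕ) + ((Fin.last (d+1)):ℕ)) = (i:ℕ) + (d+1) := by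
      intro i; simp [Fin.last]
    have hrhs : (M.updateCol (Fin.last (d+1)) (fun i => x i ^ (k:ℕ))).det
        = ∑ i, η i * x i ^ (k:ℕ) := by
      rw [hlap]
      apply Finset.sum_congr rfl
      intro i _
      rw [hsub i, Matrix.updateCol_self, hepow i, hη]
      ring
    rw [← hrhs]
    by_cases hk : k = Fin.last (d+1)
    · subst hk
      rw [if_pos rfl]
      have : M.updateCol (Fin.last (d+1)) (fun i => x i ^ ((Fin.last (d+1)):ℕ)) = M := by
        have : (fun i => x i ^ ((Fin.last (d+1)):ℕ)) = fun i => M i (Fin.last (d+1)) := by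
          funext i
          rw [hM]
          simp [Matrix.vandermonde]
        rw [this]
        exact Matrix.updateCol_eq_self M _
      rw [this]
    · rw [if_neg hk]
      rw [← Matrix.det_transpose]
      apply Matrix.det_zero_of_row_eq hk
      funext j
      show (M.updateCol (Fin.last (d+1)) (fun i => x i ^ (k:ℕ))) j k
          = (M.updateCol (Fin.last (d+1)) (fun i => x i ^ (k:ℕ))) j (Fin.last (d+1))
      rw [Matrix.updateCol_ne hk, Matrix.updateCol_self, hM]
      simp [Matrix.vandermonde]
  -- sign structure
  set P : Finset (Fin (d+2)) := Finset.univ.filter (fun i => Even ((i:ℕ) + (d+1))) with hP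
  have hηpos : ∀ i ∈ P, 0 < η i := by
    intro i hi
    rw [hP, Finset.mem_filter] at hi
    simp only [hη]
    rw [Even.neg_one_pow hi.2, one_mul]
    exact hminor_pos i
  have hηneg : ∀ i ∈ Finset.univ.filter (fun i : Fin (d+2) => ¬ Even ((i:ℕ) + (d+1))),
      η i < 0 := by
    intro i hi
    rw [Finset.mem_filter] at hi
    simp only [hη]
    rw [Odd.neg_one_pow (Nat.not_even_iff_odd.1 hi.2), neg_one_mul]
    have := hminor_pos i
    linarith
  have hmass : ∑ i, η i = 0 := by
    have h0 := hmom ⟨0, by omega⟩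
    have hne : (⟨0, by omega⟩ : Fin (d+2)) ≠ Fin.last (d+1) := by
      intro h
      have := congrArg Fin.val h
      simp [Fin.last] at this
    rw [if_neg hne] at h0
    simpa using h0
  have hsplit0 : ∑ i ∈ P, η i
      + ∑ i ∈ Finset.univ.filter (fun i : Fin (d+2) => ¬ Even ((i:ℕ) + (d+1))), η i = 0 := by
    rw [hP, Finset.sum_filter_add_sum_filter_not]
    exact hmass
  set s : ℝ := ∑ i ∈ P, η i with hs
  have hspos : 0 < s := by
    rw [hs]
    apply Finset.sum_pos hηpos
    refine ⟨Fin.last (d+1), ?_⟩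
    rw [hP, Finset.mem_filter]
    exact ⟨Finset.mem_univ _, by simp [Fin.last]⟩
  set z : Fin (d+2) → (Fin (d+1) → ℝ) := fun i => momentCurve (d+1) (t (w i)) with hz
  have hzx : ∀ (i : Fin (d+2)) (jj : Fin (d+1)), z i jj = x i ^ ((jj:ℕ)+1) := by
    intro i jj
    simp only [hz, hx, momentCurve]
  -- the two convex combinations
  have hsum1 : ∑ i ∈ P, η i / s = 1 := by
    rw [← Finset.sum_div, ← hs, div_self hspos.ne']
  have hsum1' : ∑ i ∈ Finset.univ.filter (fun i : Fin (d+2) => ¬ Even ((i:ℕ) + (d+1))),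
      (- η i) / s = 1 := by
    rw [← Finset.sum_div]
    rw [Finset.sum_neg_distrib]
    have : - ∑ i ∈ Finset.univ.filter (fun i : Fin (d+2) => ¬ Even ((i:ℕ) + (d+1))), η i = s := by
      rw [hs]; linarith [hsplit0]
    rw [this, div_self hspos.ne']
  set q : Fin (d+1) → ℝ := ∑ i ∈ P, (η i / s) • z i with hq
  set q' : Fin (d+1) → ℝ := ∑ i ∈ Finset.univ.filter
      (fun i : Fin (d+2) => ¬ Even ((i:ℕ) + (d+1))), ((- η i) / s) • z i with hq'
  have hparity : ∀ i : Fin (d+2), Even ((i:ℕ) + (d+1)) ↔ Even (d + 1 - (i:ℕ)) := by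
    intro i
    have hile : (i:ℕ) ≤ d + 1 := by have := i.2; omega
    rw [Nat.even_sub hile, Nat.even_add]
    tauto
  have hqmem : q ∈ mcConv (d+1) t σ := by
    have hmem : ∀ i ∈ P, z i ∈ (fun i => momentCurve (d+1) (t i)) '' ↑σ := by
      intro i hi
      refine ⟨w i, ?_, rfl⟩
      rw [hP, Finset.mem_filter] at hi
      have hev : Even (d + 1 - (i:ℕ)) := (hparity i).1 hi.2
      exact (hrole i).1 hev
    have := Finset.centerMass_mem_convexHull (R := ℝ) P
      (w := fun i => η i / s)
      (fun i hi => le_of_lt (div_pos (hηpos i hi) hspos))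
      (by rw [hsum1]; norm_num)
      hmem
    rw [Finset.centerMass_eq_of_sum_1 _ _ hsum1] at this
    exact this
  have hq'mem : q' ∈ mcConv (d+1) t τ := by
    have hmem : ∀ i ∈ (Finset.univ.filter (fun i : Fin (d+2) => ¬ Even ((i:ℕ) + (d+1)))),
        z i ∈ (fun i => momentCurve (d+1) (t i)) '' ↑τ := by
      intro i hi
      refine ⟨w i, ?_, rfl⟩
      rw [Finset.mem_filter] at hi
      have hodd : ¬ Even (d + 1 - (i:ℕ)) := fun h => hi.2 ((hparity i).2 h)
      exact (hrole i).2 hodd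
    have := Finset.centerMass_mem_convexHull (R := ℝ)
      (Finset.univ.filter (fun i : Fin (d+2) => ¬ Even ((i:ℕ) + (d+1))))
      (w := fun i => (- η i) / s)
      (fun i hi => le_of_lt (div_pos (by linarith [hηneg i hi]) hspos))
      (by rw [hsum1']; norm_num)
      hmem
    rw [Finset.centerMass_eq_of_sum_1 _ _ hsum1'] at this
    exact this
  have hqcoord : ∀ jj : Fin (d+1), q jj = (∑ i ∈ P, η i * x i ^ ((jj:ℕ)+1)) / s := by
    intro jj
    rw [hq, Finset.sum_apply, Finset.sum_div]
    apply Finset.sum_congr rfl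
    intro i _
    rw [Pi.smul_apply, hzx i jj, smul_eq_mul]
    ring
  have hq'coord : ∀ jj : Fin (d+1), q' jj
      = (∑ i ∈ Finset.univ.filter (fun i : Fin (d+2) => ¬ Even ((i:ℕ) + (d+1))),
          (- η i) * x i ^ ((jj:ℕ)+1)) / s := by
    intro jj
    rw [hq', Finset.sum_apply, Finset.sum_div]
    apply Finset.sum_congr rfl
    intro i _
    rw [Pi.smul_apply, hzx i jj, smul_eq_mul]
    ring
  have hmomsplit : ∀ k : Fin (d+2), ∑ i ∈ P, η i * x i ^ (k:ℕ)
      + ∑ i ∈ Finset.univ.filter (fun i : Fin (d+2) => ¬ Even ((i:ℕ) + (d+1))),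
          η i * x i ^ (k:ℕ)
      = if k = Fin.last (d+1) then M.det else 0 := by
    intro k
    rw [hP, Finset.sum_filter_add_sum_filter_not]
    exact hmom k
  have hproj : projLast d q = projLast d q' := by
    funext j
    show q j.castSucc = q' j.castSucc
    rw [hqcoord, hq'coord]
    congr 1
    have hk : ((⟨(j:ℕ)+1, by omega⟩ : Fin (d+2)) : ℕ) = (j.castSucc : ℕ) + 1 := by
      simp [Fin.castSucc, Fin.castAdd, Fin.castLE]
    have hkne : (⟨(j:ℕ)+1, by omega⟩ : Fin (d+2)) ≠ Fin.last (d+1) := by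
      intro h
      have := congrArg Fin.val h
      simp [Fin.last] at this
      have := j.2
      omega
    have := hmomsplit ⟨(j:ℕ)+1, by omega⟩
    rw [if_neg hkne] at this
    rw [hk] at this
    have hneg : ∑ i ∈ Finset.univ.filter (fun i : Fin (d+2) => ¬ Even ((i:ℕ) + (d+1))),
        (- η i) * x i ^ ((j.castSucc:ℕ)+1)
        = - ∑ i ∈ Finset.univ.filter (fun i : Fin (d+2) => ¬ Even ((i:ℕ) + (d+1))),
            η i * x i ^ ((j.castSucc:ℕ)+1) := by
      rw [← Finset.sum_neg_distrib]
      apply Finset.sum_congr rfl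
      intro i _
      ring
    rw [hneg]
    linarith [this]
  have hcast : ((Fin.last d) : ℕ) + 1 = ((Fin.last (d+1)) : ℕ) := by simp [Fin.last]
  have hneg2 : ∑ i ∈ Finset.univ.filter (fun i : Fin (d+2) => ¬ Even ((i:ℕ) + (d+1))),
      (- η i) * x i ^ (((Fin.last d):ℕ)+1)
      = - ∑ i ∈ Finset.univ.filter (fun i : Fin (d+2) => ¬ Even ((i:ℕ) + (d+1))),
          η i * x i ^ (((Fin.last d):ℕ)+1) := by
    rw [← Finset.sum_neg_distrib]
    apply Finset.sum_congr rfl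
    intro i _
    ring
  have hlast : q (Fin.last d) - q' (Fin.last d) = M.det / s := by
    rw [hqcoord, hq'coord, hneg2, div_sub_div_same]
    congr 1
    have hmm := hmomsplit (Fin.last (d+1))
    rw [if_pos rfl] at hmm
    simp only [Fin.val_last] at hmm ⊢
    linarith [hmm]
  have hcontr := hle q hqmem q' hq'mem hproj
  have hpos : 0 < M.det / s := div_pos hdet_pos hspos
  linarith


end Vdm

section B
variable {σ τ : Finset (Fin n)} {v : Fin n} {d : ℕ}

lemma keyB
    (hΔ : ∀ a, a ∈ σ ∪ τ → v < a → a ∈ σ ∧ a ∈ τ)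
    (hv : (v ∈ σ ∧ v ∉ τ) ∨ (v ∈ τ ∧ v ∉ σ))
    (hbad : (v ∈ σ ∧ Even ((σ ∩ τ).filter (fun u => v < u)).card) ∨
            (v ∈ τ ∧ ¬ Even ((σ ∩ τ).filter (fun u => v < u)).card))
    (hA : AP d σ τ) : AP d τ σ := by
  classical
  obtain ⟨L, hL, hlen⟩ := hA
  set S : Finset (Fin n) := (σ ∩ τ).filter (fun u => v < u) with hS
  set H : List (Fin n) := L.takeWhile (fun u => decide (v < u)) with hHdef
  set T : List (Fin n) := L.dropWhile (fun u => decide (v < u)) with hTdef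
  have hHT : H ++ T = L := List.takeWhile_append_dropWhile
  haveI : IsTrans (Fin n) (fun a b => b < a) := ⟨fun _ _ _ h1 h2 => lt_trans h2 h1⟩
  haveI : IsIrrefl (Fin n) (fun a b => b < a) := ⟨fun a => lt_irrefl a⟩
  have hchainL : L.Chain' (fun a b => b < a) := altR_chain hL
  have hmemL : ∀ a ∈ L, a ∈ σ ∪ τ := altR_mem_union hL
  have hHgt : ∀ a ∈ H, v < a := by
    intro a ha
    have := List.mem_takeWhile_imp ha
    simpa using this
  have hHsub : ∀ a ∈ H, a ∈ S := by
    intro a ha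
    have hgt := hHgt a ha
    have hmem : a ∈ σ ∪ τ := hmemL a ((List.takeWhile_prefix _).subset ha)
    have h2 := hΔ a hmem hgt
    rw [hS]
    simp only [Finset.mem_filter, Finset.mem_inter]
    exact ⟨⟨h2.1, h2.2⟩, hgt⟩
  have hScom : ∀ a ∈ S, (a ∈ σ ∧ a ∈ τ) ∧ v < a := by
    intro a ha
    rw [hS] at ha
    simp only [Finset.mem_filter, Finset.mem_inter] at ha
    exact ha
  have hchainH : H.Chain' (fun a b => b < a) :=
    hchainL.sublist (List.takeWhile_prefix _).sublist
  have hnodupH : H.Nodup := ((List.isChain_iff_pairwise).1 hchainH).nodup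
  have hjc : H.length ≤ S.card := by
    rw [← List.toFinset_card_of_nodup hnodupH]
    apply Finset.card_le_card
    intro a ha
    exact hHsub a (List.mem_toFinset.1 ha)
  have hsplit := altR_split (L₁ := H) (L₂ := T) (by rw [hHT]; exact hL)
  have hTlen : H.length + T.length = d + 2 := by
    rw [← hlen, ← hHT, List.length_append]
  rcases Nat.lt_or_ge H.length S.card with hjlt | hjge
  · -- Case j < c : replace the common prefix by one more common element
    set Sl : List (Fin n) := (S.sort (· ≤ ·)).reverse with hSl
    have hSlchain : Sl.Chain' (fun a b => b < a) := by
      apply List.Pairwise.isChain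
      rw [hSl, List.pairwise_reverse]
      exact S.sortedLT_sort.pairwise
    have hSllen : Sl.length = S.card := by
      rw [hSl, List.length_reverse, Finset.length_sort]
    have hSlmem : ∀ a ∈ Sl, a ∈ S := by
      intro a ha
      rw [hSl, List.mem_reverse] at ha
      exact (Finset.mem_sort _).1 ha
    set H' : List (Fin n) := Sl.take (H.length + 1) with hH'
    have hH'len : H'.length = H.length + 1 := by
      rw [hH', List.length_take, hSllen]
      omega
    have hH'chain : H'.Chain' (fun a b => b < a) :=
      hSlchain.sublist (List.take_sublist _ _)
    have hH'mem : ∀ a ∈ H', a ∈ S := fun a ha =>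
      hSlmem a ((List.take_sublist _ _).subset ha)
    have halt : altR τ σ (H' ++ T) := by
      apply altR_append
      · exact altR_of_common hH'chain (fun a ha =>
          ⟨(hScom a (hH'mem a ha)).1.2, (hScom a (hH'mem a ha)).1.1⟩)
      · rcases hsplit.2 with ⟨hev, hT⟩ | ⟨hev, hT⟩
        · right
          constructor
          · rw [hH'len]
            simpa [Nat.even_add_one] using hev
          · exact hT
        · left
          constructor
          · rw [hH'len]
            simpa [Nat.even_add_one] using hev
          · exact hT
      · intro a ha b hb
        have haS : a ∈ S := hH'mem a (List.mem_of_mem_getLast? ha)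
        have hva : v < a := (hScom a haS).2
        have hbv : ¬ v < b := by
          have h3 := List.head?_dropWhile_not (fun u => decide (v < u)) L
          rw [← hTdef] at h3
          rw [Option.mem_def] at hb
          rw [hb] at h3
          simpa using h3
        exact lt_of_le_of_lt (le_of_not_gt hbv) hva
    refine ⟨(H' ++ T).take (d + 2), altR_take _ halt, ?_⟩
    rw [List.length_take, List.length_append, hH'len]
    omega
  · -- Case j = c (j ≥ c and j ≤ c)
    have hjeq : H.length = S.card := le_antisymm hjc hjge
    rcases hTcase : T with _ | ⟨b, T'⟩
    · -- T empty : L is entirely common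
      refine ⟨L, altR_of_common hchainL ?_, hlen⟩
      intro a ha
      have : a ∈ H := by
        rw [← hHT, hTcase, List.append_nil] at ha
        exact ha
      exact ⟨(hScom a (hHsub a this)).1.2, (hScom a (hHsub a this)).1.1⟩
    · have hbv : ¬ v < b := by
        have h3 := List.head?_dropWhile_not (fun u => decide (v < u)) L
        rw [← hTdef, hTcase] at h3
        simpa using h3
      have haltH : altR τ σ H := altR_of_common hchainH (fun a ha =>
        ⟨(hScom a (hHsub a ha)).1.2, (hScom a (hHsub a ha)).1.1⟩)
      have hjunc : ∀ a ∈ H.getLast?, ∀ x ∈ (v :: b :: T').head?, x < a := by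
        intro a ha x hx
        rw [List.head?_cons, Option.mem_def, Option.some.injEq] at hx
        subst hx
        exact hHgt a (List.mem_of_mem_getLast? ha)
      rcases hbad with ⟨hvσ, hev⟩ | ⟨hvτ, hev⟩
      · -- v ∈ σ \ τ, c even
        have hvnτ : v ∉ τ := by
          rcases hv with ⟨_, h⟩ | ⟨_, h⟩
          · exact h
          · exact absurd hvσ h
        have hevH : Even H.length := by rw [hjeq]; exact hev
        rcases hsplit.2 with ⟨_, hTalt⟩ | ⟨hodd, _⟩
        swap
        · exact absurd hevH hodd
        rw [hTcase] at hTalt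
        obtain ⟨hbτ, hbbd, hT'⟩ := hTalt
        have hbltv : b < v := lt_of_le_of_ne (le_of_not_gt hbv) (fun h => hvnτ (h ▸ hbτ))
        have halt : altR τ σ (H ++ (v :: b :: T')) := by
          apply altR_append haltH
          · left
            refine ⟨hevH, hvσ, ?_, hbτ, hbbd, hT'⟩
            intro x hx
            rw [List.head?_cons, Option.mem_def, Option.some.injEq] at hx
            subst hx
            exact hbltv
          · exact hjunc
        refine ⟨(H ++ (v :: b :: T')).take (d + 2), altR_take _ halt, ?_⟩
        rw [List.length_take, List.length_append]
        have : T.length = T'.length + 1 := by rw [hTcase]; simp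
        simp only [List.length_cons]
        omega
      · -- v ∈ τ \ σ, c odd
        have hvnσ : v ∉ σ := by
          rcases hv with ⟨_, h⟩ | ⟨_, h⟩
          · exact absurd hvτ h
          · exact h
        have hoddH : ¬ Even H.length := by rw [hjeq]; exact hev
        rcases hsplit.2 with ⟨hevH, _⟩ | ⟨_, hTalt⟩
        · exact absurd hevH hoddH
        rw [hTcase] at hTalt
        obtain ⟨hbσ, hbbd, hT'⟩ := hTalt
        have hbltv : b < v := lt_of_le_of_ne (le_of_not_gt hbv) (fun h => hvnσ (h ▸ hbσ))
        have halt : altR τ σ (H ++ (v :: b :: T')) := by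
          apply altR_append haltH
          · right
            refine ⟨hoddH, hvτ, ?_, hbσ, hbbd, hT'⟩
            intro x hx
            rw [List.head?_cons, Option.mem_def, Option.some.injEq] at hx
            subst hx
            exact hbltv
          · exact hjunc
        refine ⟨(H ++ (v :: b :: T')).take (d + 2), altR_take _ halt, ?_⟩
        rw [List.length_take, List.length_append]
        have : T.length = T'.length + 1 := by rw [hTcase]; simp
        simp only [List.length_cons]
        omega

end B

noncomputable def G (σ : Finset (Fin n)) : ℤ :=
  ∑ u ∈ σ, (-1) ^ ((σ.filter (fun w => u < w)).card) * 3 ^ (u : ℕ)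

section Arith
variable {σ τ : Finset (Fin n)} {v : Fin n}

private lemma low_bound (ρ : Finset (Fin n)) (v : Fin n) (e : Fin n → ℕ) :
    |2 * ∑ u ∈ ρ.filter (fun u => u < v),
        (-1 : ℤ) ^ (e u) * 3 ^ (u : ℕ)| ≤ 3 ^ (v : ℕ) - 1 := by
  rw [abs_mul, abs_two]
  classical
  have h1 : |∑ u ∈ ρ.filter (fun u => u < v),
      (-1 : ℤ) ^ (e u) * 3 ^ (u : ℕ)| ≤
      ∑ u ∈ ρ.filter (fun u => u < v), (3 : ℤ) ^ (u : ℕ) := by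
    refine le_trans (Finset.abs_sum_le_sum_abs _ _) ?_
    apply Finset.sum_le_sum
    intro u _
    rw [abs_mul, abs_pow, abs_neg, abs_one, one_pow, one_mul, abs_pow]
    simp
  have h2 : ∑ u ∈ ρ.filter (fun u => u < v), (3 : ℤ) ^ (u : ℕ) ≤
      ∑ k ∈ Finset.range (v : ℕ), (3 : ℤ) ^ k := by
    have himg : ∑ u ∈ ρ.filter (fun u => u < v), (3 : ℤ) ^ (u : ℕ)
        = ∑ k ∈ (ρ.filter (fun u => u < v)).image (fun u : Fin n => (u : ℕ)),
            (3 : ℤ) ^ k := by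
      rw [Finset.sum_image]
      intro x _ y _ h
      exact Fin.val_injective h
    rw [himg]
    apply Finset.sum_le_sum_of_subset_of_nonneg
    · intro k hk
      simp only [Finset.mem_image, Finset.mem_filter] at hk
      obtain ⟨u, ⟨_, hu⟩, rfl⟩ := hk
      exact Finset.mem_range.2 hu
    · intro k _ _
      positivity
  have h3 : (∑ k ∈ Finset.range (v : ℕ), (3 : ℤ) ^ k) * (3 - 1) = 3 ^ (v : ℕ) - 1 :=
    geom_sum_mul 3 (v : ℕ)
  nlinarith [h1, h2, h3]

/-- The main arithmetic step: correct parity at the top of the symmetric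
difference forces `G σ < G τ`. -/
lemma G_lt_of_rule
    (hΔ : ∀ a, a ∈ σ ∪ τ → v < a → a ∈ σ ∧ a ∈ τ)
    (hcase : (v ∈ τ ∧ v ∉ σ ∧ Even ((τ.filter (fun w => v < w)).card)) ∨
             (v ∈ σ ∧ v ∉ τ ∧ ¬ Even ((σ.filter (fun w => v < w)).card))) :
    G σ < G τ := by
  classical
  have hGσ : G σ = ∑ u ∈ σ.filter (fun u => v < u),
        (-1 : ℤ) ^ ((σ.filter (fun w => u < w)).card) * 3 ^ (u : ℕ)
      + ∑ u ∈ σ.filter (fun u => ¬ v < u),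
        (-1 : ℤ) ^ ((σ.filter (fun w => u < w)).card) * 3 ^ (u : ℕ) :=
    (Finset.sum_filter_add_sum_filter_not σ _ _).symm
  have hGτ : G τ = ∑ u ∈ τ.filter (fun u => v < u),
        (-1 : ℤ) ^ ((τ.filter (fun w => u < w)).card) * 3 ^ (u : ℕ)
      + ∑ u ∈ τ.filter (fun u => ¬ v < u),
        (-1 : ℤ) ^ ((τ.filter (fun w => u < w)).card) * 3 ^ (u : ℕ) :=
    (Finset.sum_filter_add_sum_filter_not τ _ _).symm
  have hhiset : σ.filter (fun u => v < u) = τ.filter (fun u => v < u) := by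
    ext a
    simp only [Finset.mem_filter]
    constructor
    · rintro ⟨ha, hva⟩
      exact ⟨(hΔ a (Finset.mem_union_left _ ha) hva).2, hva⟩
    · rintro ⟨ha, hva⟩
      exact ⟨(hΔ a (Finset.mem_union_right _ ha) hva).1, hva⟩
  have hsigneq : ∀ u : Fin n, v < u →
      (σ.filter (fun w => u < w)).card = (τ.filter (fun w => u < w)).card := by
    intro u hu
    congr 1
    ext a
    simp only [Finset.mem_filter]
    constructor
    · rintro ⟨ha, hua⟩
      exact ⟨(hΔ a (Finset.mem_union_left _ ha) (lt_trans hu hua)).2, hua⟩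
    · rintro ⟨ha, hua⟩
      exact ⟨(hΔ a (Finset.mem_union_right _ ha) (lt_trans hu hua)).1, hua⟩
  have hhisum : ∑ u ∈ σ.filter (fun u => v < u),
        (-1 : ℤ) ^ ((σ.filter (fun w => u < w)).card) * 3 ^ (u : ℕ)
      = ∑ u ∈ τ.filter (fun u => v < u),
        (-1 : ℤ) ^ ((τ.filter (fun w => u < w)).card) * 3 ^ (u : ℕ) := by
    rw [hhiset]
    apply Finset.sum_congr rfl
    intro u hu
    have hvu : v < u := (Finset.mem_filter.1 hu).2
    rw [hsigneq u hvu]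
  rcases hcase with ⟨hvτ, hvnσ, hev⟩ | ⟨hvσ, hvnτ, hev⟩
  · -- v ∈ τ
    have hτlow : τ.filter (fun u => ¬ v < u) = insert v (τ.filter (fun u => u < v)) := by
      ext a
      simp only [Finset.mem_filter, Finset.mem_insert]
      constructor
      · rintro ⟨ha, hva⟩
        rcases lt_or_eq_of_le (le_of_not_gt hva) with h | h
        · exact Or.inr ⟨ha, h⟩
        · exact Or.inl h
      · rintro (rfl | ⟨ha, hav⟩)
        · exact ⟨hvτ, lt_irrefl _⟩
        · exact ⟨ha, not_lt_of_gt hav⟩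
    have hσlow : σ.filter (fun u => ¬ v < u) = σ.filter (fun u => u < v) := by
      ext a
      simp only [Finset.mem_filter]
      constructor
      · rintro ⟨ha, hva⟩
        refine ⟨ha, lt_of_le_of_ne (le_of_not_gt hva) ?_⟩
        rintro rfl
        exact hvnσ ha
      · rintro ⟨ha, hav⟩
        exact ⟨ha, not_lt_of_gt hav⟩
    have hvnotin : v ∉ τ.filter (fun u => u < v) := by simp [lt_irrefl]
    have hfv : (-1 : ℤ) ^ ((τ.filter (fun w => v < w)).card) * 3 ^ (v : ℕ)
        = 3 ^ (v : ℕ) := by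
      rw [Even.neg_one_pow hev, one_mul]
    have hb1 := low_bound σ v (fun u => (σ.filter (fun w => u < w)).card)
    have hb2 := low_bound τ v (fun u => (τ.filter (fun w => u < w)).card)
    have e1 : G τ = ∑ u ∈ τ.filter (fun u => v < u),
          (-1 : ℤ) ^ ((τ.filter (fun w => u < w)).card) * 3 ^ (u : ℕ)
        + (3 ^ (v : ℕ) + ∑ u ∈ τ.filter (fun u => u < v),
          (-1 : ℤ) ^ ((τ.filter (fun w => u < w)).card) * 3 ^ (u : ℕ)) := by
      rw [hGτ, hτlow, Finset.sum_insert hvnotin, hfv]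
    have e2 : G σ = ∑ u ∈ σ.filter (fun u => v < u),
          (-1 : ℤ) ^ ((σ.filter (fun w => u < w)).card) * 3 ^ (u : ℕ)
        + ∑ u ∈ σ.filter (fun u => u < v),
          (-1 : ℤ) ^ ((σ.filter (fun w => u < w)).card) * 3 ^ (u : ℕ) := by
      rw [hGσ, hσlow]
    obtain ⟨hb1a, hb1b⟩ := abs_le.1 hb1
    obtain ⟨hb2a, hb2b⟩ := abs_le.1 hb2
    have hpow : (1 : ℤ) ≤ 3 ^ (v : ℕ) := one_le_pow₀ (by norm_num)
    linarith [hhisum]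
  · -- v ∈ σ
    have hσlow : σ.filter (fun u => ¬ v < u) = insert v (σ.filter (fun u => u < v)) := by
      ext a
      simp only [Finset.mem_filter, Finset.mem_insert]
      constructor
      · rintro ⟨ha, hva⟩
        rcases lt_or_eq_of_le (le_of_not_gt hva) with h | h
        · exact Or.inr ⟨ha, h⟩
        · exact Or.inl h
      · rintro (rfl | ⟨ha, hav⟩)
        · exact ⟨hvσ, lt_irrefl _⟩
        · exact ⟨ha, not_lt_of_gt hav⟩
    have hτlow : τ.filter (fun u => ¬ v < u) = τ.filter (fun u => u < v) := by
      ext a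
      simp only [Finset.mem_filter]
      constructor
      · rintro ⟨ha, hva⟩
        refine ⟨ha, lt_of_le_of_ne (le_of_not_gt hva) ?_⟩
        rintro rfl
        exact hvnτ ha
      · rintro ⟨ha, hav⟩
        exact ⟨ha, not_lt_of_gt hav⟩
    have hvnotin : v ∉ σ.filter (fun u => u < v) := by simp [lt_irrefl]
    have hfv : (-1 : ℤ) ^ ((σ.filter (fun w => v < w)).card) * 3 ^ (v : ℕ)
        = - 3 ^ (v : ℕ) := by
      rw [Odd.neg_one_pow (Nat.not_even_iff_odd.1 hev), neg_one_mul]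
    have hb1 := low_bound σ v (fun u => (σ.filter (fun w => u < w)).card)
    have hb2 := low_bound τ v (fun u => (τ.filter (fun w => u < w)).card)
    have e1 : G σ = ∑ u ∈ σ.filter (fun u => v < u),
          (-1 : ℤ) ^ ((σ.filter (fun w => u < w)).card) * 3 ^ (u : ℕ)
        + (- 3 ^ (v : ℕ) + ∑ u ∈ σ.filter (fun u => u < v),
          (-1 : ℤ) ^ ((σ.filter (fun w => u < w)).card) * 3 ^ (u : ℕ)) := by
      rw [hGσ, hσlow, Finset.sum_insert hvnotin, hfv]
    have e2 : G τ = ∑ u ∈ τ.filter (fun u => v < u),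
          (-1 : ℤ) ^ ((τ.filter (fun w => u < w)).card) * 3 ^ (u : ℕ)
        + ∑ u ∈ τ.filter (fun u => u < v),
          (-1 : ℤ) ^ ((τ.filter (fun w => u < w)).card) * 3 ^ (u : ℕ) := by
      rw [hGτ, hτlow]
    obtain ⟨hb1a, hb1b⟩ := abs_le.1 hb1
    obtain ⟨hb2a, hb2b⟩ := abs_le.1 hb2
    have hpow : (1 : ℤ) ≤ 3 ^ (v : ℕ) := one_le_pow₀ (by norm_num)
    linarith [hhisum]

end Arith

section GAP
variable {σ τ : Finset (Fin n)} {d : ℕ}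

lemma G_lt_of_AP (hA : AP d σ τ) (hB : ¬ AP d τ σ) : G σ < G τ := by
  classical
  have hne : σ ≠ τ := by
    rintro rfl
    exact hB hA
  have hΔne : ((σ \ τ) ∪ (τ \ σ)).Nonempty := by
    rw [Finset.nonempty_iff_ne_empty]
    intro h
    rw [Finset.union_eq_empty] at h
    exact hne (le_antisymm (Finset.sdiff_eq_empty_iff_subset.1 h.1)
      (Finset.sdiff_eq_empty_iff_subset.1 h.2))
  set v : Fin n := ((σ \ τ) ∪ (τ \ σ)).max' hΔne with hvdef
  have hvΔ : v ∈ (σ \ τ) ∪ (τ \ σ) := Finset.max'_mem _ _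
  have hv : (v ∈ σ ∧ v ∉ τ) ∨ (v ∈ τ ∧ v ∉ σ) := by
    rw [Finset.mem_union, Finset.mem_sdiff, Finset.mem_sdiff] at hvΔ
    exact hvΔ
  have hΔprop : ∀ a, a ∈ σ ∪ τ → v < a → a ∈ σ ∧ a ∈ τ := by
    intro a ha hva
    have hnΔ : a ∉ (σ \ τ) ∪ (τ \ σ) := by
      intro h
      exact absurd (Finset.le_max' _ _ h) (not_le_of_gt hva)
    rw [Finset.mem_union, Finset.mem_sdiff, Finset.mem_sdiff] at hnΔ
    rw [Finset.mem_union] at ha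
    push_neg at hnΔ
    rcases ha with ha | ha
    · exact ⟨ha, hnΔ.1 ha⟩
    · exact ⟨hnΔ.2 ha, ha⟩
  have hnotbad : ¬ ((v ∈ σ ∧ Even (((σ ∩ τ).filter (fun u => v < u)).card)) ∨
      (v ∈ τ ∧ ¬ Even (((σ ∩ τ).filter (fun u => v < u)).card))) := by
    intro hbad
    exact hB (keyB hΔprop hv hbad hA)
  have hcardτ : τ.filter (fun w => v < w) = (σ ∩ τ).filter (fun u => v < u) := by
    ext a
    simp only [Finset.mem_filter, Finset.mem_inter]
    constructor
    · rintro ⟨ha, hva⟩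
      exact ⟨⟨(hΔprop a (Finset.mem_union_right _ ha) hva).1, ha⟩, hva⟩
    · rintro ⟨⟨_, ha⟩, hva⟩
      exact ⟨ha, hva⟩
  have hcardσ : σ.filter (fun w => v < w) = (σ ∩ τ).filter (fun u => v < u) := by
    ext a
    simp only [Finset.mem_filter, Finset.mem_inter]
    constructor
    · rintro ⟨ha, hva⟩
      exact ⟨⟨ha, (hΔprop a (Finset.mem_union_left _ ha) hva).2⟩, hva⟩
    · rintro ⟨⟨ha, _⟩, hva⟩
      exact ⟨ha, hva⟩
  apply G_lt_of_rule hΔprop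
  rcases hv with ⟨hvσ, hvnτ⟩ | ⟨hvτ, hvnσ⟩
  · right
    refine ⟨hvσ, hvnτ, ?_⟩
    rw [hcardσ]
    intro hev
    exact hnotbad (Or.inl ⟨hvσ, hev⟩)
  · left
    refine ⟨hvτ, hvnσ, ?_⟩
    rw [hcardτ]
    by_contra hodd
    exact hnotbad (Or.inr ⟨hvτ, hodd⟩)


end GAP

lemma exists_weights {d : ℕ} {t : Fin n → ℝ} {σ : Finset (Fin n)} {p : Fin d → ℝ}
    (hp : p ∈ mcConv d t σ) :
    ∃ lam : Fin n → ℝ, (∀ i, 0 ≤ lam i) ∧ (∀ i, lam i ≠ 0 → i ∈ σ) ∧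
      ∑ i, lam i = 1 ∧ ∑ i, lam i • momentCurve d (t i) = p := by
  classical
  set f : Fin n → (Fin d → ℝ) := fun i => momentCurve d (t i) with hf
  have hσne : σ.Nonempty := by
    rcases Finset.eq_empty_or_nonempty σ with rfl | h
    · exfalso
      rw [mcConv] at hp
      simp [convexHull_empty] at hp
    · exact h
  obtain ⟨i₀, hi₀⟩ := hσne
  have himg : (fun i => momentCurve d (t i)) '' ↑σ = ↑(σ.image f) := by
    rw [Finset.coe_image, hf]
  rw [mcConv, himg, Finset.convexHull_eq] at hp
  obtain ⟨w, hw0, hw1, hwc⟩ := hp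
  set g : (Fin d → ℝ) → Fin n := fun y =>
    if h : y ∈ σ.image f then (Finset.mem_image.1 h).choose else i₀ with hg
  have hgspec : ∀ y ∈ σ.image f, g y ∈ σ ∧ f (g y) = y := by
    intro y hy
    have h1 := (Finset.mem_image.1 hy).choose_spec
    rw [hg]
    simp only [dif_pos hy]
    exact ⟨h1.1, h1.2⟩
  set lam : Fin n → ℝ := fun j =>
    ∑ y ∈ (σ.image f).filter (fun y => g y = j), w y with hlam
  refine ⟨lam, ?_, ?_, ?_, ?_⟩
  · intro j
    apply Finset.sum_nonneg
    intro y hy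
    exact hw0 y (Finset.mem_filter.1 hy).1
  · intro j hj
    rw [hlam] at hj
    have : ((σ.image f).filter (fun y => g y = j)).Nonempty := by
      by_contra h
      rw [Finset.not_nonempty_iff_eq_empty] at h
      simp [h] at hj
    obtain ⟨y, hy⟩ := this
    obtain ⟨hy1, hy2⟩ := Finset.mem_filter.1 hy
    rw [← hy2]
    exact (hgspec y hy1).1
  · rw [hlam]
    rw [Finset.sum_fiberwise_of_maps_to (fun y _ => Finset.mem_univ (g y))]
    exact hw1
  · have hstep : ∀ j : Fin n, lam j • f j
        = ∑ y ∈ (σ.image f).filter (fun y => g y = j), w y • y := by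
      intro j
      rw [hlam, Finset.sum_smul]
      apply Finset.sum_congr rfl
      intro y hy
      obtain ⟨hy1, hy2⟩ := Finset.mem_filter.1 hy
      rw [← hy2, (hgspec y hy1).2]
    calc ∑ j, lam j • momentCurve d (t j)
        = ∑ j, ∑ y ∈ (σ.image f).filter (fun y => g y = j), w y • y := by
          apply Finset.sum_congr rfl
          intro j _
          exact hstep j
      _ = ∑ y ∈ σ.image f, w y • y :=
          Finset.sum_fiberwise_of_maps_to (fun y _ => Finset.mem_univ (g y)) _
      _ = p := by
          rw [← hwc, Finset.centerMass_eq_of_sum_1 _ id hw1]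
          apply Finset.sum_congr rfl
          intro y _
          rfl


private lemma samesign {x p q : ℝ} (hx : x ≠ 0) (h1 : 0 < x * p) (h2 : 0 < x * q) :
    0 < p * q := by nlinarith [mul_pos h1 h2, sq_nonneg x]

private lemma oppsign {x p q : ℝ} (hx : x ≠ 0) (h1 : x * p < 0) (h2 : 0 < x * q) :
    p * q < 0 := by nlinarith [mul_pos (neg_pos.2 h1) h2, sq_nonneg x]

private lemma flipflip {p q du dv : ℝ} (hdu : du < 0) (hdv : dv < 0)
    (h : (p * du) * (q * dv) < 0) : p * q < 0 := by
  nlinarith [mul_pos (neg_pos.2 hdu) (neg_pos.2 hdv)]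

private lemma flipone {p q du dv : ℝ} (hdu : 0 < du) (hdv : dv < 0)
    (h : (p * du) * (q * dv) < 0) : 0 < p * q := by
  nlinarith [mul_pos hdu (neg_pos.2 hdv)]

private lemma keepkeep {p q du dv : ℝ} (hdu : 0 < du) (hdv : 0 < dv)
    (h : (p * du) * (q * dv) < 0) : p * q < 0 := by
  nlinarith [mul_pos hdu hdv]

private lemma sum_map_sub {ι : Type*} (l : List ι) (f g : ι → ℝ) :
    (l.map (fun i => f i - g i)).sum = (l.map f).sum - (l.map g).sum := by
  induction l with
  | nil => simp
  | cons a l ih => simp [ih]; ring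

private lemma sum_map_neg' {ι : Type*} (l : List ι) (f : ι → ℝ) :
    (l.map (fun i => - f i)).sum = - (l.map f).sum := by
  induction l with
  | nil => simp
  | cons a l ih => simp [ih]; ring

/-- getLast of a descending list is its minimum. -/
private lemma getLast_min : ∀ (M : List (Fin n)) (h : M.Pairwise (fun a b => b < a))
    (hne : M ≠ []) (x : Fin n), x ∈ M → M.getLast hne ≤ x := by
  intro M
  induction M with
  | nil => intro _ hne; exact absurd rfl hne
  | cons u M2 ih =>
    intro h hne x hx
    rcases eq_or_ne M2 [] with rfl | hM2
    · simp at hx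
      subst hx
      simp [List.getLast]
    · rw [List.getLast_cons hM2]
      rcases List.mem_cons.1 hx with rfl | hx2
      · have hlt : M2.getLast hM2 < x :=
          (List.pairwise_cons.1 h).1 _ (List.getLast_mem hM2)
        exact le_of_lt hlt
      · exact ih (List.pairwise_cons.1 h).2 hM2 x hx2

/-- transfer a chain along adjacent pairs using membership info -/
private lemma chain_transfer {R S : Fin n → Fin n → Prop} :
    ∀ (M : List (Fin n)), (∀ u ∈ M, ∀ v ∈ M, R u v → S u v) →
      M.Chain' R → M.Chain' S := by
  intro M
  induction M with
  | nil => intro _ _; exact List.isChain_nil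
  | cons u M2 ih =>
    intro himp hch
    rcases M2 with _ | ⟨v, M3⟩
    · exact List.isChain_singleton _
    · simp only [List.Chain', List.isChain_cons_cons] at hch ⊢
      refine ⟨himp u (by simp) v (by simp) hch.1, ?_⟩
      apply ih ?_ hch.2
      intro x hx y hy
      exact himp x (List.mem_cons_of_mem _ hx) y (List.mem_cons_of_mem _ hy)

private lemma exists_opp {ν : Fin n → ℝ} {a : Fin n} {R : List (Fin n)}
    (hnz : ∀ i ∈ a :: R, ν i ≠ 0)
    (hsum : ((a :: R).map ν).sum = 0) : ∃ b ∈ R, ν a * ν b < 0 := by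
  by_contra hcon
  push_neg at hcon
  have hprod : ∀ b ∈ R, 0 < ν a * ν b := by
    intro b hb
    rcases lt_or_eq_of_le (hcon b hb) with h | h
    · exact h
    · exfalso
      rcases mul_eq_zero.1 h.symm with h' | h'
      · exact hnz a (by simp) h'
      · exact hnz b (List.mem_cons_of_mem _ hb) h'
  rcases lt_or_gt_of_ne (hnz a (by simp) : ν a ≠ 0) with ha | ha
  · -- ν a < 0 : all entries negative
    have hall : ∀ x ∈ (a :: R).map ν, 0 < - x := by
      intro x hx
      rw [List.mem_map] at hx
      obtain ⟨i, hi, rfl⟩ := hx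
      rcases List.mem_cons.1 hi with rfl | hi2
      · linarith
      · have := hprod i hi2
        nlinarith
    have hpos := List.sum_pos (((a :: R).map ν).map (fun x => - x))
      (by intro x hx; rw [List.mem_map] at hx; obtain ⟨y, hy, rfl⟩ := hx; exact hall y hy)
      (by simp)
    rw [show ((a :: R).map ν).map (fun x => - x) = (a :: R).map (fun i => - ν i) by
      rw [List.map_map]; rfl] at hpos
    rw [sum_map_neg'] at hpos
    rw [hsum] at hpos
    simp at hpos
  · have hall : ∀ x ∈ (a :: R).map ν, 0 < x := by
      intro x hx
      rw [List.mem_map] at hx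
      obtain ⟨i, hi, rfl⟩ := hx
      rcases List.mem_cons.1 hi with rfl | hi2
      · exact ha
      · have := hprod i hi2
        nlinarith
    have hpos := List.sum_pos _ hall (by simp)
    rw [hsum] at hpos
    exact lt_irrefl _ hpos

theorem signchange {t : Fin n → ℝ} (ht : StrictMono t) :
    ∀ (D : ℕ) (ν : Fin n → ℝ) (L : List (Fin n)),
      L.Pairwise (fun a b => b < a) → (∀ i ∈ L, ν i ≠ 0) → L ≠ [] →
      (∀ k, k ≤ D → ((L.map (fun i => ν i * t i ^ k)).sum = 0)) →
      ∃ M : List (Fin n), M.Sublist L ∧ M.length = D + 2 ∧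
        M.Chain' (fun u v => ν u * ν v < 0) := by
  intro D
  induction D with
  | zero =>
    intro ν L hpw hnz hne hmom
    rcases L with _ | ⟨a, R⟩
    · exact absurd rfl hne
    have hsum : ((a :: R).map ν).sum = 0 := by
      have h0 := hmom 0 le_rfl
      rw [show ((a :: R).map (fun i => ν i * t i ^ 0)) = (a :: R).map ν by
        apply List.map_congr_left; intro i _; simp] at h0
      exact h0
    obtain ⟨b, hb, hab⟩ := exists_opp hnz hsum
    refine ⟨[a, b], ?_, rfl, ?_⟩
    · exact List.cons_sublist_cons.2 (List.singleton_sublist.2 hb)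
    · simp [List.Chain', List.isChain_cons_cons, hab]
  | succ D ih =>
    intro ν L hpw hnz hne hmom
    rcases L with _ | ⟨a, R⟩
    · exact absurd rfl hne
    have hsum : ((a :: R).map ν).sum = 0 := by
      have h0 := hmom 0 (by omega)
      rw [show ((a :: R).map (fun i => ν i * t i ^ 0)) = (a :: R).map ν by
        apply List.map_congr_left; intro i _; simp] at h0
      exact h0
    obtain ⟨b0, hb0, hab0⟩ := exists_opp hnz hsum
    set p : Fin n → Bool := fun i => decide (0 < ν a * ν i) with hp
    set XL : List (Fin n) := a :: R.takeWhile p with hXL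
    set T : List (Fin n) := R.dropWhile p with hT
    have hLsplit : XL ++ T = a :: R := by
      rw [hXL, hT]
      simp [List.takeWhile_append_dropWhile]
    have hTne : T ≠ [] := by
      intro hTnil
      rw [hT, List.dropWhile_eq_nil_iff] at hTnil
      have := hTnil b0 hb0
      rw [hp] at this
      simp at this
      linarith
    rcases hTc : T with _ | ⟨b, T2⟩
    · exact absurd hTc hTne
    have hbopp : ν a * ν b < 0 := by
      have h3 := List.head?_dropWhile_not p R
      rw [← hT, hTc] at h3
      simp [hp] at h3
      have hbmem : b ∈ a :: R := by
        rw [← hLsplit, hTc]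
        exact List.mem_append_right _ (by simp)
      have hbnz := hnz b hbmem
      have hanz := hnz a (by simp)
      rcases lt_trichotomy (ν a * ν b) 0 with h | h | h
      · exact h
      · exfalso
        rcases mul_eq_zero.1 h with h' | h'
        · exact hanz h'
        · exact hbnz h'
      · linarith
    have hXLsign : ∀ i ∈ XL, 0 < ν a * ν i := by
      intro i hi
      rw [hXL] at hi
      rcases List.mem_cons.1 hi with h | hi2
      · rw [h]
        have := hnz a (by simp)
        exact mul_self_pos.2 this
      · have := List.mem_takeWhile_imp hi2
        rw [hp] at this
        simpa using this
    -- order separation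
    have hpwL : (XL ++ T).Pairwise (fun a b => b < a) := by rw [hLsplit]; exact hpw
    have hsep : ∀ i ∈ XL, ∀ j ∈ T, j < i :=
      (List.pairwise_append.1 hpwL).2.2
    have hXLne : XL ≠ [] := by rw [hXL]; simp
    set m : Fin n := XL.getLast hXLne with hm
    have hmXL : m ∈ XL := List.getLast_mem hXLne
    have hmmin : ∀ i ∈ XL, m ≤ i :=
      fun i hi => getLast_min XL (List.pairwise_append.1 hpwL).1 hXLne i hi
    have hbm : b < m := hsep m hmXL b (by rw [hTc]; simp)
    set θ : ℝ := (t b + t m) / 2 with hθ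
    have hbθ : t b < θ := by
      rw [hθ]
      have := ht hbm
      linarith
    have hθm : θ < t m := by
      rw [hθ]
      have := ht hbm
      linarith
    have hXθ : ∀ i ∈ XL, θ < t i := by
      intro i hi
      rcases lt_or_eq_of_le (hmmin i hi) with h | h
      · exact lt_trans hθm (ht h)
      · rw [← h]; exact hθm
    have hTθ : ∀ j ∈ T, t j < θ := by
      intro j hj
      rw [hTc] at hj
      rcases List.mem_cons.1 hj with rfl | hj2
      · exact hbθ
      · have hjb : j < b := by
          have hpwT : T.Pairwise (fun a b => b < a) := (List.pairwise_append.1 hpwL).2.1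
          rw [hTc] at hpwT
          exact (List.pairwise_cons.1 hpwT).1 j hj2
        exact lt_trans (ht hjb) hbθ
    set ν' : Fin n → ℝ := fun i => ν i * (t i - θ) with hν'
    have hmemLsplit : ∀ i ∈ (a :: R), i ∈ XL ∨ i ∈ T := by
      intro i hi
      rw [← hLsplit] at hi
      exact List.mem_append.1 hi
    have hnz' : ∀ i ∈ a :: R, ν' i ≠ 0 := by
      intro i hi
      rw [hν']
      apply mul_ne_zero (hnz i hi)
      rcases hmemLsplit i hi with h | h
      · have := hXθ i h; intro hc; rw [sub_eq_zero] at hc; linarith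
      · have := hTθ i h; intro hc; rw [sub_eq_zero] at hc; linarith
    have hmom' : ∀ k, k ≤ D → (((a :: R).map (fun i => ν' i * t i ^ k)).sum = 0) := by
      intro k hk
      have heq : ((a :: R).map (fun i => ν' i * t i ^ k))
          = (a :: R).map (fun i => ν i * t i ^ (k+1) - θ * (ν i * t i ^ k)) := by
        apply List.map_congr_left
        intro i _
        rw [hν']
        ring
      rw [heq, sum_map_sub, List.sum_map_mul_left, hmom (k+1) (by omega), hmom k (by omega)]
      ring
    obtain ⟨M', hM'sub, hM'len, hM'chain⟩ := ih ν' (a :: R) hpw hnz' hne hmom'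
    -- split M' along XL ++ T
    rw [← hLsplit] at hM'sub
    obtain ⟨Mx, My, rfl, hMx, hMy⟩ := List.sublist_append_iff.1 hM'sub
    have hMxXL : ∀ u ∈ Mx, u ∈ XL := fun u hu => hMx.subset hu
    have hMyT : ∀ u ∈ My, u ∈ T := fun u hu => hMy.subset hu
    obtain ⟨hchMx, hchMy, hjunc⟩ := List.isChain_append.1 hM'chain
    -- transfer chain on My to ν
    have hMychain : My.Chain' (fun u v => ν u * ν v < 0) := by
      apply chain_transfer My ?_ hchMy
      intro u hu v hv h
      have hu' := hTθ u (hMyT u hu)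
      have hv' := hTθ v (hMyT v hv)
      rw [hν'] at h
      exact flipflip (by linarith) (by linarith) h
    have hMyT2 : My.Sublist T := hMy
    have hTsubR : T.Sublist R := by rw [hT]; exact List.dropWhile_sublist p
    -- case analysis on Mx
    have hanz := hnz a (by simp)
    rcases hMxc : Mx with _ | ⟨u, Mxr⟩
    · -- Mx empty : M' = My
      rw [hMxc] at hM'len
      simp only [List.nil_append, List.length_nil, List.length_append, zero_add] at hM'len
      have hM'len' : My.length = D + 2 := by simpa using hM'len
      rcases hMyc : My with _ | ⟨c, My2⟩
      · rw [hMyc] at hM'len'; simp at hM'len'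
      have hcT : c ∈ T := hMyT c (by rw [hMyc]; simp)
      have hcmem : c ∈ a :: R := by
        rw [← hLsplit]
        exact List.mem_append_right _ hcT
      have hcnz := hnz c hcmem
      rcases lt_trichotomy (ν a * ν c) 0 with hac | hac | hac
      · -- prepend a
        refine ⟨a :: My, ?_, ?_, ?_⟩
        · exact List.cons_sublist_cons.2 (hMyT2.trans hTsubR)
        · rw [List.length_cons, hM'len']
        · simp only [hMyc, List.Chain', List.isChain_cons_cons]
          rw [hMyc] at hMychain
          exact ⟨hac, hMychain⟩
      · exfalso
        rcases mul_eq_zero.1 hac with h' | h'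
        · exact hanz h'
        · exact hcnz h'
      · -- c has same sign as a ; use b instead
        have hcb : c ≠ b := by
          intro h
          rw [h] at hac
          linarith
        have hMyT2' : My.Sublist T2 := by
          rw [hTc] at hMyT2
          rcases List.sublist_cons_iff.1 hMyT2 with h | ⟨r, hr, hrs⟩
          · exact h
          · exfalso
            rw [hMyc] at hr
            injection hr with h1 h2
            exact hcb h1
        have hbc : ν b * ν c < 0 := oppsign hanz hbopp hac
        have hsub1 : (b :: My).Sublist T := by
          rw [hTc]
          exact List.cons_sublist_cons.2 hMyT2'
        refine ⟨b :: My, ?_, ?_, ?_⟩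
        · exact ((hsub1.trans hTsubR).trans (List.sublist_cons_self a R))
        · rw [List.length_cons, hM'len']
        · simp only [hMyc, List.Chain', List.isChain_cons_cons]
          rw [hMyc] at hMychain
          exact ⟨hbc, hMychain⟩
    · rcases hMxrc : Mxr with _ | ⟨v, Mxr2⟩
      · -- Mx = [u]
        rw [hMxrc] at hMxc
        rw [hMxc] at hM'len hMx hjunc
        have hMylen : My.length = D + 1 := by
          simp only [List.length_append, List.length_cons, List.length_nil] at hM'len
          omega
        rcases hMyc : My with _ | ⟨c, My2⟩
        · rw [hMyc] at hMylen; simp at hMylen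
        have huXL : u ∈ XL := by
          apply hMx.subset
          simp
        have hcT : c ∈ T := hMyT c (by rw [hMyc]; simp)
        have hcmem : c ∈ a :: R := by
          rw [← hLsplit]
          exact List.mem_append_right _ hcT
        have humem : u ∈ a :: R := by
          rw [← hLsplit]
          exact List.mem_append_left _ huXL
        have hunz := hnz u humem
        have hcnz := hnz c hcmem
        have hrel'uc : ν' u * ν' c < 0 := by
          apply hjunc u ?_ c ?_
          · simp
          · rw [hMyc]; simp
        have hdu : 0 < t u - θ := by have := hXθ u huXL; linarith
        have hdc : t c - θ < 0 := by have := hTθ c hcT; linarith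
        have huc : 0 < ν u * ν c := by
          rw [hν'] at hrel'uc
          exact flipone hdu hdc hrel'uc
        have hau : 0 < ν u * ν a := by
          have := hXLsign u huXL
          linarith [mul_comm (ν a) (ν u)]
        have hac : 0 < ν a * ν c := samesign hunz hau huc
        have hcb : c ≠ b := by
          intro h
          rw [h] at hac
          linarith
        have hMyT2' : My.Sublist T2 := by
          rw [hTc] at hMyT2
          rcases List.sublist_cons_iff.1 hMyT2 with h | ⟨r, hr, hrs⟩
          · exact h
          · exfalso
            rw [hMyc] at hr
            injection hr with h1 h2
            exact hcb h1
        have hbc : ν b * ν c < 0 := oppsign hanz hbopp hac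
        have hsub1 : (b :: My).Sublist T := by
          rw [hTc]
          exact List.cons_sublist_cons.2 hMyT2'
        refine ⟨a :: b :: My, ?_, ?_, ?_⟩
        · exact List.cons_sublist_cons.2 (hsub1.trans hTsubR)
        · rw [List.length_cons, List.length_cons, hMylen]
        · simp only [hMyc, List.Chain', List.isChain_cons_cons]
          rw [hMyc] at hMychain
          exact ⟨hbopp, hbc, hMychain⟩
      · -- Mx has two elements : contradiction
        exfalso
        rw [hMxrc] at hMxc
        rw [hMxc] at hchMx hMx
        have huXL : u ∈ XL := hMx.subset (by simp)
        have hvXL : v ∈ XL := hMx.subset (by simp)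
        have humem : u ∈ a :: R := by
          rw [← hLsplit]; exact List.mem_append_left _ huXL
        have hvmem : v ∈ a :: R := by
          rw [← hLsplit]; exact List.mem_append_left _ hvXL
        have hrel'uv : ν' u * ν' v < 0 := (List.isChain_cons_cons.1 hchMx).1
        have hdu : 0 < t u - θ := by have := hXθ u huXL; linarith
        have hdv : 0 < t v - θ := by have := hXθ v hvXL; linarith
        have huv : ν u * ν v < 0 := by
          rw [hν'] at hrel'uv
          exact keepkeep hdu hdv hrel'uv
        have h1 := hXLsign u huXL
        have h2 := hXLsign v hvXL
        have := samesign hanz h1 h2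
        linarith


/-- convert a sign-alternating descending list into an `altR` alternation. -/
lemma altR_of_signs :
    ∀ (M : List (Fin n)) (ν : Fin n → ℝ) (σ τ : Finset (Fin n)),
      (∀ i ∈ M, ν i < 0 → i ∈ σ) → (∀ i ∈ M, 0 < ν i → i ∈ τ) →
      M.Pairwise (fun a b => b < a) →
      M.Chain' (fun u v => ν u * ν v < 0) →
      (∀ i ∈ M, ν i ≠ 0) →
      (∀ c ∈ M.head?, 0 < ν c) →
      altR σ τ M := by
  intro M
  induction M with
  | nil => intro ν σ τ _ _ _ _ _ _; trivial
  | cons a M2 ih =>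
    intro ν σ τ hmemσ hmemτ hpw hch hnz hhead
    have hapos : 0 < ν a := hhead a rfl
    refine ⟨hmemτ a (by simp) hapos, ?_, ?_⟩
    · intro b hb
      have hbmem : b ∈ M2 := by
        rcases M2 with _ | ⟨c, M3⟩
        · simp at hb
        · simp at hb; simp [hb]
      exact (List.pairwise_cons.1 hpw).1 b hbmem
    · -- tail with flipped sign function
      apply ih (fun i => - ν i) τ σ
      · intro i hi h
        exact hmemτ i (List.mem_cons_of_mem _ hi) (by linarith)
      · intro i hi h
        exact hmemσ i (List.mem_cons_of_mem _ hi) (by linarith)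
      · exact (List.pairwise_cons.1 hpw).2
      · have : M2.Chain' (fun u v => ν u * ν v < 0) := hch.tail
        apply List.IsChain.imp ?_ this
        intro u v h
        nlinarith
      · intro i hi h
        exact hnz i (List.mem_cons_of_mem _ hi) (by linarith)
      · intro c hc
        rcases M2 with _ | ⟨c', M3⟩
        · simp at hc
        · have hcc : c' = c := by simpa using hc
          have hrel : ν a * ν c' < 0 := (List.isChain_cons_cons.1 hch).1
          show 0 < - ν c
          rw [← hcc]
          nlinarith

section Step
variable {d : ℕ} {t : Fin n → ℝ} {σ τ : Finset (Fin n)}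

lemma step_main (ht : StrictMono t) (h : HeightLT d t σ τ) :
    AP d σ τ ∧ ¬ AP d τ σ := by
  classical
  have hnAP : ¬ AP d τ σ := fun hA => not_heightLE_of_AP ht hA h.2
  refine ⟨?_, hnAP⟩
  obtain ⟨p, hp, hnp⟩ := Set.not_subset.1 h.1
  obtain ⟨hpσ, hpτ⟩ := hp
  obtain ⟨lam, hlam0, hlamsupp, hlam1, hlamsum⟩ := exists_weights hpσ
  obtain ⟨mu, hmu0, hmusupp, hmu1, hmusum⟩ := exists_weights hpτ
  set ν : Fin n → ℝ := fun i => mu i - lam i with hν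
  -- ν is not identically zero
  have hνne : ∃ i, ν i ≠ 0 := by
    by_contra hc
    push_neg at hc
    have hlm : ∀ i, lam i = mu i := by
      intro i
      have := hc i
      rw [hν] at this
      simp only [sub_eq_zero] at this
      exact this.symm
    apply hnp
    -- p is a convex combination of points from σ ∩ τ
    have hsupp : ∀ i, lam i ≠ 0 → i ∈ σ ∩ τ := by
      intro i hi
      rw [Finset.mem_inter]
      refine ⟨hlamsupp i hi, hmusupp i ?_⟩
      rw [← hlm i]
      exact hi
    set F : Finset (Fin n) := Finset.univ.filter (fun i => lam i ≠ 0) with hF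
    have hsum1F : ∑ i ∈ F, lam i = 1 := by
      rw [hF, Finset.sum_filter_of_ne (fun x _ hx => hx)]
      exact hlam1
    have hsumF : ∑ i ∈ F, lam i • momentCurve d (t i) = p := by
      rw [hF, Finset.sum_filter_of_ne]
      · exact hlamsum
      · intro x _ hx
        intro hlx
        rw [hlx] at hx
        simp at hx
    have hzmem : ∀ i ∈ F, (fun i => momentCurve d (t i)) i ∈
        (fun i => momentCurve d (t i)) '' ↑(σ ∩ τ) := by
      intro i hi
      refine ⟨i, ?_, rfl⟩
      rw [hF, Finset.mem_filter] at hi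
      exact Finset.mem_coe.2 (hsupp i hi.2)
    have := Finset.centerMass_mem_convexHull (R := ℝ) F
      (w := lam) (fun i _ => hlam0 i) (by rw [hsum1F]; norm_num)
      (z := fun i => momentCurve d (t i)) hzmem
    rw [Finset.centerMass_eq_of_sum_1 _ _ hsum1F, hsumF] at this
    exact this
  -- support of ν as a descending list
  set supp : Finset (Fin n) := Finset.univ.filter (fun i => ν i ≠ 0) with hsupp
  set Ls : List (Fin n) := (supp.sort (· ≤ ·)).reverse with hLs
  have hLspw : Ls.Pairwise (fun a b => b < a) := by
    rw [hLs, List.pairwise_reverse]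
    exact supp.sortedLT_sort.pairwise
  have hLsmem : ∀ i, i ∈ Ls ↔ i ∈ supp := by
    intro i
    rw [hLs, List.mem_reverse, Finset.mem_sort]
  have hLsnodup : Ls.Nodup := by
    haveI : IsIrrefl (Fin n) (fun a b : Fin n => b < a) := ⟨fun a => lt_irrefl a⟩
    exact hLspw.nodup
  have hLsne : Ls ≠ [] := by
    obtain ⟨i, hi⟩ := hνne
    intro hnil
    have : i ∈ Ls := (hLsmem i).2 (by rw [hsupp]; simp [hi])
    rw [hnil] at this
    simp at this
  have hLsnz : ∀ i ∈ Ls, ν i ≠ 0 := by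
    intro i hi
    have := (hLsmem i).1 hi
    rw [hsupp, Finset.mem_filter] at this
    exact this.2
  -- moments vanish
  have hcoord : ∀ k : ℕ, 1 ≤ k → k ≤ d →
      ∑ i, lam i * t i ^ k = ∑ i, mu i * t i ^ k := by
    intro k hk1 hkd
    have hj : k - 1 < d := by omega
    have h1 : ∑ i, lam i * t i ^ k = p ⟨k-1, hj⟩ := by
      rw [← hlamsum, Finset.sum_apply]
      apply Finset.sum_congr rfl
      intro i _
      rw [Pi.smul_apply, smul_eq_mul]
      show lam i * t i ^ k = lam i * (t i) ^ ((k-1) + 1)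
      congr 2
      omega
    have h2 : ∑ i, mu i * t i ^ k = p ⟨k-1, hj⟩ := by
      rw [← hmusum, Finset.sum_apply]
      apply Finset.sum_congr rfl
      intro i _
      rw [Pi.smul_apply, smul_eq_mul]
      show mu i * t i ^ k = mu i * (t i) ^ ((k-1) + 1)
      congr 2
      omega
    rw [h1, h2]
  have hmomL : ∀ k, k ≤ d → ((Ls.map (fun i => ν i * t i ^ k)).sum = 0) := by
    intro k hk
    have htof : Ls.toFinset = supp := by
      ext i
      rw [List.mem_toFinset, hLsmem]
    have hconv : (Ls.map (fun i => ν i * t i ^ k)).sum = ∑ i ∈ supp, ν i * t i ^ k := by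
      rw [← List.sum_toFinset _ hLsnodup, htof]
    rw [hconv]
    have hfull : ∑ i ∈ supp, ν i * t i ^ k = ∑ i, ν i * t i ^ k := by
      rw [hsupp]
      apply Finset.sum_filter_of_ne
      intro x _ hx hx0
      rw [hx0] at hx
      simp at hx
    rw [hfull]
    have hsplit : ∑ i, ν i * t i ^ k = ∑ i, mu i * t i ^ k - ∑ i, lam i * t i ^ k := by
      rw [← Finset.sum_sub_distrib]
      apply Finset.sum_congr rfl
      intro i _
      rw [hν]
      ring
    rw [hsplit]
    rcases Nat.eq_zero_or_pos k with rfl | hkpos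
    · have e1 : ∑ i, mu i * t i ^ 0 = 1 := by
        rw [← hmu1]
        apply Finset.sum_congr rfl
        intro i _
        simp
      have e2 : ∑ i, lam i * t i ^ 0 = 1 := by
        rw [← hlam1]
        apply Finset.sum_congr rfl
        intro i _
        simp
      rw [e1, e2]
      ring
    · rw [hcoord k hkpos hk]
      ring
  obtain ⟨M, hMsub, hMlen, hMch⟩ := signchange ht d ν Ls hLspw hLsnz hLsne hmomL
  have hMpw : M.Pairwise (fun a b => b < a) := List.Pairwise.sublist hMsub hLspw
  have hMnz : ∀ i ∈ M, ν i ≠ 0 := fun i hi => hLsnz i (hMsub.subset hi)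
  have hmemσ : ∀ i, ν i < 0 → i ∈ σ := by
    intro i hi
    apply hlamsupp
    simp only [hν] at hi
    have := hmu0 i
    intro h0
    rw [h0] at hi
    linarith
  have hmemτ : ∀ i, 0 < ν i → i ∈ τ := by
    intro i hi
    apply hmusupp
    simp only [hν] at hi
    have := hlam0 i
    intro h0
    rw [h0] at hi
    linarith
  rcases hMc : M with _ | ⟨c, M2⟩
  · rw [hMc] at hMlen; simp at hMlen
  rw [hMc] at hMpw hMch hMnz hMlen
  have hcnz : ν c ≠ 0 := hMnz c (by simp)
  rcases lt_or_gt_of_ne hcnz with hcneg | hcpos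
  · -- head negative : top of alternation lies in σ, contradicting HeightLE
    exfalso
    have halt : altR τ σ (c :: M2) := by
      apply altR_of_signs (c :: M2) (fun i => - ν i) τ σ
      · intro i hi h
        exact hmemτ i (by linarith)
      · intro i hi h
        exact hmemσ i (by linarith)
      · exact hMpw
      · apply List.IsChain.imp ?_ hMch
        intro u v h
        nlinarith
      · intro i hi h
        exact hMnz i hi (by linarith)
      · intro x hx
        simp at hx
        subst hx
        simpa using hcneg
    exact hnAP ⟨c :: M2, halt, hMlen⟩
  · -- head positive : altR σ τ
    have halt : altR σ τ (c :: M2) := by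
      apply altR_of_signs (c :: M2) ν σ τ
      · intro i hi h
        exact hmemσ i h
      · intro i hi h
        exact hmemτ i h
      · exact hMpw
      · exact hMch
      · exact hMnz
      · intro x hx
        simp at hx
        subst hx
        exact hcpos
    exact ⟨c :: M2, halt, hMlen⟩

end Step

end POProof

/-- **Lemma.** The relation `⪯_{d+1}` is a partial order on the simplices on `γ_d` with
vertices in `[n]`: it is reflexive, transitive and antisymmetric. -/
theorem precEq_is_partial_order
    (d n : ℕ) (t : Fin n → ℝ) (ht : StrictMono t) :
    (∀ σ : Finset (Fin n), PrecEq d t σ σ) ∧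
    (∀ σ τ ρ : Finset (Fin n), PrecEq d t σ τ → PrecEq d t τ ρ → PrecEq d t σ ρ) ∧
    (∀ σ τ : Finset (Fin n), PrecEq d t σ τ → PrecEq d t τ σ → σ = τ) := by
  classical
  have hstep : ∀ σ τ : Finset (Fin n), HeightLTSimplex d t σ τ →
      POProof.G σ < POProof.G τ := by
    intro σ τ h
    obtain ⟨hA, hnA⟩ := POProof.step_main ht h.2.2
    exact POProof.G_lt_of_AP hA hnA
  have hmono : ∀ σ τ : Finset (Fin n), PrecEq d t σ τ → POProof.G σ ≤ POProof.G τ := by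
    intro σ τ h
    induction h with
    | refl => exact le_rfl
    | tail _ hst ih => exact le_trans ih (le_of_lt (hstep _ _ hst))
  refine ⟨fun σ => Relation.ReflTransGen.refl,
    fun σ τ ρ h1 h2 => Relation.ReflTransGen.trans h1 h2, ?_⟩
  intro σ τ h1 h2
  rcases Relation.ReflTransGen.cases_head h1 with rfl | ⟨ρ, hstep1, hrest⟩
  · rfl
  · exfalso
    have h3 : POProof.G ρ ≤ POProof.G τ := hmono _ _ hrest
    have h4 : POProof.G τ ≤ POProof.G σ := hmono _ _ h2
    have h5 : POProof.G σ < POProof.G ρ := hstep _ _ hstep1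
    linarith
end

section
/- Fix t₁ < ⋯ < t_n and identify i ∈ [n] with γ_d(t_i). Let T be a triangulation of the cyclic polytope C(n,d) = conv{γ_d(t₁), …, γ_d(t_n)} with vertex set [n], and let σ ⊆ [n] be a simplex on γ_d. Then σ ≤_{d+1} T if and only if for every d-simplex τ ∈ T, either σ and τ do not overlap in ℝ^d, or σ <_{d+1} τ. -/
open Finset

section Aux

private lemma isLinearMap_projLast (d : ℕ) : IsLinearMap ℝ (projLast d) :=
  ⟨fun _ _ => rfl, fun _ _ => rfl⟩

private lemma image_projLast_mcConv (d n : ℕ) (t : Fin n → ℝ) (ρ : Finset (Fin n)) :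
    projLast d '' mcConv (d + 1) t ρ = mcConv d t ρ := by
  unfold mcConv
  rw [(isLinearMap_projLast d).image_convexHull, Set.image_image]
  rfl

private lemma mcConv_mono (d : ℕ) {n : ℕ} (t : Fin n → ℝ) {ρ σ : Finset (Fin n)}
    (h : ρ ⊆ σ) : mcConv d t ρ ⊆ mcConv d t σ :=
  convexHull_mono (Set.image_mono (by exact_mod_cast h))

private lemma mem_mcConv_succ {d n : ℕ} {t : Fin n → ℝ} (ht : StrictMono t)
    {σ : Finset (Fin n)} {q : Fin (d + 1) → ℝ} :
    q ∈ mcConv (d + 1) t σ ↔ ∃ w : Fin n → ℝ, (∀ i ∈ σ, 0 ≤ w i) ∧ (∑ i ∈ σ, w i = 1) ∧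
      ∑ i ∈ σ, w i • momentCurve (d + 1) (t i) = q := by
  set f : Fin n → (Fin (d + 1) → ℝ) := fun i => momentCurve (d + 1) (t i) with hf
  have hinj : ∀ x ∈ σ, ∀ y ∈ σ, f x = f y → x = y := by
    intro i _ j _ h
    have h0 := congrFun h ⟨0, Nat.succ_pos d⟩
    simp only [f, momentCurve, zero_add, pow_one] at h0
    exact ht.injective h0
  constructor
  · intro hq
    rw [mcConv, ← Finset.coe_image, Finset.convexHull_eq] at hq
    obtain ⟨w, hw0, hw1, hwc⟩ := hq
    refine ⟨fun i => w (f i), fun i hi => hw0 _ (Finset.mem_image_of_mem f hi), ?_, ?_⟩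
    · rw [← Finset.sum_image hinj]; exact hw1
    · rw [Finset.centerMass_eq_of_sum_1 _ _ hw1] at hwc
      simp only [id] at hwc
      rw [← hwc]
      exact (Finset.sum_image (f := fun y => w y • y) hinj).symm
  · rintro ⟨w, hw0, hw1, rfl⟩
    rw [← Finset.centerMass_eq_of_sum_1 _ _ hw1]
    exact Finset.centerMass_mem_convexHull _ hw0 (by rw [hw1]; norm_num)
      (fun i hi => Set.mem_image_of_mem f hi)

/-- Vandermonde-type vanishing: if the "moments" of `c` up to degree `d` vanish on a set of at
most `d + 1` distinct nodes, then `c` vanishes there. Proved via Lagrange interpolation. -/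
private lemma vanish_of_moments {d n : ℕ} {t : Fin n → ℝ} (ht : StrictMono t)
    {σ : Finset (Fin n)} (hσ : σ.card ≤ d + 1) {c : Fin n → ℝ}
    (h : ∀ j < d + 1, ∑ i ∈ σ, c i * t i ^ j = 0) :
    ∀ i ∈ σ, c i = 0 := by
  intro i₀ hi₀
  have hinj : Set.InjOn t ↑σ := ht.injective.injOn
  set P := Lagrange.basis σ t i₀ with hP
  have hcard : 1 ≤ σ.card := Finset.card_pos.mpr ⟨i₀, hi₀⟩
  have hdeg : P.natDegree < d + 1 := by
    rw [hP, Lagrange.natDegree_basis hinj hi₀]; omega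
  have h1 : ∑ i ∈ σ, c i * P.eval (t i) = c i₀ := by
    rw [Finset.sum_eq_single i₀]
    · rw [Lagrange.eval_basis_self hinj hi₀, mul_one]
    · intro j hj hji
      rw [Lagrange.eval_basis_of_ne (Ne.symm hji) hj, mul_zero]
    · intro hni; exact absurd hi₀ hni
  have h2 : ∑ i ∈ σ, c i * P.eval (t i) = 0 := by
    have heval : ∀ i : Fin n, P.eval (t i) =
        ∑ j ∈ Finset.range (d + 1), P.coeff j * t i ^ j :=
      fun i => Polynomial.eval_eq_sum_range' hdeg (t i)
    calc ∑ i ∈ σ, c i * P.eval (t i)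
        = ∑ i ∈ σ, ∑ j ∈ Finset.range (d + 1), c i * (P.coeff j * t i ^ j) := by
          simp_rw [heval, Finset.mul_sum]
      _ = ∑ j ∈ Finset.range (d + 1), ∑ i ∈ σ, c i * (P.coeff j * t i ^ j) :=
          Finset.sum_comm
      _ = ∑ j ∈ Finset.range (d + 1), P.coeff j * ∑ i ∈ σ, c i * t i ^ j := by
          refine Finset.sum_congr rfl fun j _ => ?_
          rw [Finset.mul_sum]
          exact Finset.sum_congr rfl fun i _ => by ring
      _ = 0 := by
          refine Finset.sum_eq_zero fun j hj => ?_
          rw [h j (Finset.mem_range.mp hj), mul_zero]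
  rw [← h1, h2]

/-- The projection forgetting the last coordinate is injective on the lifted simplex. -/
private lemma proj_injOn {d n : ℕ} {t : Fin n → ℝ} (ht : StrictMono t)
    {σ : Finset (Fin n)} (hσ : σ.card ≤ d + 1) {q q' : Fin (d + 1) → ℝ}
    (hq : q ∈ mcConv (d + 1) t σ) (hq' : q' ∈ mcConv (d + 1) t σ)
    (h : projLast d q = projLast d q') : q = q' := by
  obtain ⟨w, hw0, hw1, hwq⟩ := (mem_mcConv_succ ht).1 hq
  obtain ⟨u, hu0, hu1, huq⟩ := (mem_mcConv_succ ht).1 hq'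
  have happ : ∀ (v : Fin n → ℝ) (idx : Fin (d + 1)),
      (∑ i ∈ σ, v i • momentCurve (d + 1) (t i)) idx = ∑ i ∈ σ, v i * t i ^ (idx.1 + 1) := by
    intro v idx
    rw [Finset.sum_apply]
    exact Finset.sum_congr rfl fun i _ => rfl
  have key : ∀ i ∈ σ, w i - u i = 0 := by
    apply vanish_of_moments ht hσ
    intro j hj
    rcases Nat.eq_zero_or_pos j with rfl | hjpos
    · simp only [pow_zero, mul_one, Finset.sum_sub_distrib, hw1, hu1, sub_self]
    · obtain ⟨k, rfl⟩ := Nat.exists_eq_succ_of_ne_zero (Nat.pos_iff_ne_zero.mp hjpos)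
      have hk : k < d := by omega
      have hcoord := congrFun h ⟨k, hk⟩
      have e1 : projLast d q ⟨k, hk⟩ = q ⟨k, by omega⟩ := rfl
      have e2 : projLast d q' ⟨k, hk⟩ = q' ⟨k, by omega⟩ := rfl
      rw [e1, e2, ← hwq, ← huq, happ, happ] at hcoord
      simp only [sub_mul, Finset.sum_sub_distrib]
      rw [hcoord, sub_self]
  funext idx
  rw [← hwq, ← huq, happ, happ]
  refine Finset.sum_congr rfl fun i hi => ?_
  rw [sub_eq_zero.mp (key i hi)]

/-- If a point of the lifted simplex over `σ` projects into `conv(ρ)` for a subset `ρ ⊆ σ`,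
then it lies in the lifted simplex over `ρ`. -/
private lemma mem_lift_of_proj {d n : ℕ} {t : Fin n → ℝ} (ht : StrictMono t)
    {ρ σ : Finset (Fin n)} (hρσ : ρ ⊆ σ) (hσ : σ.card ≤ d + 1) {q : Fin (d + 1) → ℝ}
    (hq : q ∈ mcConv (d + 1) t σ) (hp : projLast d q ∈ mcConv d t ρ) :
    q ∈ mcConv (d + 1) t ρ := by
  rw [← image_projLast_mcConv d n t ρ] at hp
  obtain ⟨q', hq', hqq'⟩ := hp
  have hq'σ : q' ∈ mcConv (d + 1) t σ := mcConv_mono (d + 1) t hρσ hq'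
  have := proj_injOn ht hσ hq hq'σ hqq'.symm
  rwa [this]

end Aux

/-- **Lemma.** For a triangulation `T` of the cyclic polytope `C(n,d)` with vertex set
`[n]` and a simplex `σ ⊆ [n]` on `γ_d`: `σ ≤_{d+1} T` iff for every `d`-simplex `τ ∈ T`,
either `σ` and `τ` do not overlap in `ℝ^d` or `σ <_{d+1} τ`. -/
theorem simplexLE_triangulation_iff
    (d n : ℕ) (t : Fin n → ℝ) (ht : StrictMono t)
    (T : Finset (Finset (Fin n)))
    (hT : IsTriangulation d t Finset.univ T) (hTV : UsesAllVertices Finset.univ T)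
    (σ : Finset (Fin n)) (hσ : σ.card ≤ d + 1) :
    SimplexLE d t σ T ↔ ∀ τ ∈ T, ¬ Overlap d t σ τ ∨ HeightLT d t σ τ := by
  constructor
  · intro h τ hτ
    by_cases hov : Overlap d t σ τ
    · exact Or.inr ⟨hov, h τ hτ⟩
    · exact Or.inl hov
  · intro h τ hτ
    rcases h τ hτ with hov | hlt
    · -- no overlap: on the common domain the heights agree, since the common domain is a face
      intro q hq q' hq' hproj
      have hsub : mcConv d t σ ∩ mcConv d t τ ⊆ mcConv d t (σ ∩ τ) := not_not.mp hov
      have hpσ : projLast d q ∈ mcConv d t σ := by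
        rw [← image_projLast_mcConv]; exact ⟨q, hq, rfl⟩
      have hpτ : projLast d q ∈ mcConv d t τ := by
        rw [hproj, ← image_projLast_mcConv]; exact ⟨q', hq', rfl⟩
      have hp : projLast d q ∈ mcConv d t (σ ∩ τ) := hsub ⟨hpσ, hpτ⟩
      have hcτ : τ.card ≤ d + 1 := le_of_eq (hT.1 τ hτ).1
      have h1 : q ∈ mcConv (d + 1) t (σ ∩ τ) :=
        mem_lift_of_proj ht Finset.inter_subset_left hσ hq hp
      have h2 : q' ∈ mcConv (d + 1) t (σ ∩ τ) :=
        mem_lift_of_proj ht Finset.inter_subset_right hcτ hq' (by rwa [← hproj])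
      have hcard : (σ ∩ τ).card ≤ d + 1 :=
        le_trans (Finset.card_le_card Finset.inter_subset_left) hσ
      have := proj_injOn ht hcard h1 h2 hproj
      exact le_of_eq (congrFun this _)
    · exact hlt.2
end
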